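/- arXiv:2307.04079 — 6 statements merged into one kernel-verified Lean document; each statement's English description precedes it below -/
import Mathlib

section
/- In a projective rectangle, if l is a line and p is a point not on l, then the number of lines through p that meet l equals the number of points on l. -/
/-- A projective rectangle: an incidence structure satisfying axioms (A1)-(A6). -/
structure ProjRect (Point Line : Type) where
  Incid : Point → Line → Prop
  /-- (A4) the special point. -/
  D : Point
  /-- (A1) every two distinct points lie on exactly one line. -/
  A1 : ∀ p q : Point, p ≠ q → ∃! l : Line, Incid p l ∧ Incid q l
  /-- (A2) there exist four points with no three collinear. -/
  A2 : ∃ a b c d : Point, a ≠ b ∧ a ≠ c ∧ a ≠ d ∧ b ≠ c ∧ b ≠ d ∧ c ≠ d ∧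
    (∀ l : Line, ¬(Incid a l ∧ Incid b l ∧ Incid c l)) ∧
    (∀ l : Line, ¬(Incid a l ∧ Incid b l ∧ Incid d l)) ∧
    (∀ l : Line, ¬(Incid a l ∧ Incid c l ∧ Incid d l)) ∧
    (∀ l : Line, ¬(Incid b l ∧ Incid c l ∧ Incid d l))
  /-- (A3) every line has at least three points. -/
  A3 : ∀ l : Line, ∃ p q r : Point, p ≠ q ∧ p ≠ r ∧ q ≠ r ∧
    Incid p l ∧ Incid q l ∧ Incid r l
  /-- (A5) each special line intersects every other line in exactly one point. -/
  A5 : ∀ s l : Line, Incid D s → l ≠ s → ∃! p : Point, Incid p s ∧ Incid p l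
  /-- (A6) restricted Pasch axiom. -/
  A6 : ∀ l1 l2 l3 l4 : Line, ∀ p p13 p14 p23 p24 : Point,
    ¬Incid D l1 → ¬Incid D l2 → l1 ≠ l2 → Incid p l1 → Incid p l2 → l3 ≠ l4 →
    Incid p13 l1 → Incid p13 l3 → Incid p14 l1 → Incid p14 l4 →
    Incid p23 l2 → Incid p23 l3 → Incid p24 l2 → Incid p24 l4 →
    p13 ≠ p14 → p13 ≠ p23 → p13 ≠ p24 → p14 ≠ p23 → p14 ≠ p24 → p23 ≠ p24 →
    ∃ q : Point, Incid q l3 ∧ Incid q l4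

namespace ProjRect

variable {Point Line : Type} (R : ProjRect Point Line)

theorem eq_of_incid_of_incid {a b : Point} {m n : Line} (hab : a ≠ b) (ham : R.Incid a m)
    (hbm : R.Incid b m) (han : R.Incid a n) (hbn : R.Incid b n) : m = n :=
  (R.A1 a b hab).unique ⟨ham, hbm⟩ ⟨han, hbn⟩

noncomputable def join {a b : Point} (hab : a ≠ b) : Line :=
  (R.A1 a b hab).exists.choose

theorem incid_join_left {a b : Point} (hab : a ≠ b) : R.Incid a (R.join hab) :=
  (R.A1 a b hab).exists.choose_spec.1

theorem incid_join_right {a b : Point} (hab : a ≠ b) : R.Incid b (R.join hab) :=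
  (R.A1 a b hab).exists.choose_spec.2

theorem eq_join {a b : Point} (hab : a ≠ b) {m : Line} (ham : R.Incid a m)
    (hbm : R.Incid b m) : m = R.join hab :=
  R.eq_of_incid_of_incid hab ham hbm (R.incid_join_left hab) (R.incid_join_right hab)

variable {R} {p : Point} {l : Line}

theorem ne_of_not_incid_of_incid (hp : ¬R.Incid p l) {q : Point} (hq : R.Incid q l) : p ≠ q :=
  fun h => hp (h ▸ hq)

noncomputable def joinLine (hp : ¬R.Incid p l) (q : {q : Point // R.Incid q l}) :
    {l' : Line // R.Incid p l' ∧ ∃ q, R.Incid q l' ∧ R.Incid q l} :=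
  let hpq := ne_of_not_incid_of_incid hp q.2
  ⟨R.join hpq, R.incid_join_left hpq, q, R.incid_join_right hpq, q.2⟩

theorem joinLine_injective (hp : ¬R.Incid p l) : Function.Injective (joinLine hp) := by
  rintro ⟨q, hq⟩ ⟨q', hq'⟩ h
  refine Subtype.ext (by_contra fun hqq' => hp ?_)
  have hjoin := congrArg Subtype.val h
  simp only [joinLine] at hjoin
  -- the join of `p` with `q` passes through `q` and `q'`, so it would be `l`, which misses `p`
  have hl : R.join (ne_of_not_incid_of_incid hp hq) = l :=
    R.eq_of_incid_of_incid hqq' (R.incid_join_right _) (hjoin ▸ R.incid_join_right _) hq hq'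
  exact hl ▸ R.incid_join_left _

theorem joinLine_surjective (hp : ¬R.Incid p l) : Function.Surjective (joinLine hp) := by
  rintro ⟨l', hpl', q, hql', hql⟩
  exact ⟨⟨q, hql⟩, Subtype.ext (R.eq_join (ne_of_not_incid_of_incid hp hql) hpl' hql').symm⟩

end ProjRect

/-- If l is a line and p a point not on l, the lines through p meeting l are in
bijection with the points of l. -/
theorem stmt_2 {Point Line : Type} (R : ProjRect Point Line) (l : Line) (p : Point)
    (hp : ¬R.Incid p l) :
    Nonempty ({l' : Line // R.Incid p l' ∧ ∃ q, R.Incid q l' ∧ R.Incid q l} ≃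
      {q : Point // R.Incid q l}) :=
  ⟨(Equiv.ofBijective _ ⟨ProjRect.joinLine_injective hp, ProjRect.joinLine_surjective hp⟩).symm⟩
end

section
/- In a projective rectangle, all ordinary lines have the same number of points, and this number equals the number of special lines. -/
/-!
Projection from the special point `D`: a point `p` of an ordinary line `l` differs from `D`,
so it spans with `D` a unique line, which is special (A1). Conversely, a special line `s` is
distinct from the ordinary line `l`, so it meets `l` in exactly one point (A5). The two maps
are mutually inverse by the uniqueness parts of (A1) and (A5).
-/

namespace ProjRect

variable {Point Line : Type} (R : ProjRect Point Line)

theorem ne_D_of_incid {p : Point} {l : Line} (hl : ¬R.Incid R.D l) (hp : R.Incid p l) :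
    p ≠ R.D :=
  fun h => hl (h ▸ hp)

theorem ne_of_not_incid_D {s l : Line} (hs : R.Incid R.D s) (hl : ¬R.Incid R.D l) : l ≠ s :=
  fun h => hl (h ▸ hs)

noncomputable def lineThroughD {p : Point} (hp : p ≠ R.D) : Line :=
  (R.A1 p R.D hp).exists.choose

theorem incid_lineThroughD {p : Point} (hp : p ≠ R.D) : R.Incid p (R.lineThroughD hp) :=
  (R.A1 p R.D hp).exists.choose_spec.1

theorem D_incid_lineThroughD {p : Point} (hp : p ≠ R.D) : R.Incid R.D (R.lineThroughD hp) :=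
  (R.A1 p R.D hp).exists.choose_spec.2

theorem eq_lineThroughD {p : Point} (hp : p ≠ R.D) {s : Line} (hps : R.Incid p s)
    (hDs : R.Incid R.D s) : s = R.lineThroughD hp :=
  (R.A1 p R.D hp).unique ⟨hps, hDs⟩ ⟨R.incid_lineThroughD hp, R.D_incid_lineThroughD hp⟩

noncomputable def meet {s l : Line} (hs : R.Incid R.D s) (hl : ¬R.Incid R.D l) : Point :=
  (R.A5 s l hs (R.ne_of_not_incid_D hs hl)).exists.choose

theorem meet_incid_left {s l : Line} (hs : R.Incid R.D s) (hl : ¬R.Incid R.D l) :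
    R.Incid (R.meet hs hl) s :=
  (R.A5 s l hs (R.ne_of_not_incid_D hs hl)).exists.choose_spec.1

theorem meet_incid_right {s l : Line} (hs : R.Incid R.D s) (hl : ¬R.Incid R.D l) :
    R.Incid (R.meet hs hl) l :=
  (R.A5 s l hs (R.ne_of_not_incid_D hs hl)).exists.choose_spec.2

theorem eq_meet {s l : Line} (hs : R.Incid R.D s) (hl : ¬R.Incid R.D l) {p : Point}
    (hps : R.Incid p s) (hpl : R.Incid p l) : p = R.meet hs hl :=
  (R.A5 s l hs (R.ne_of_not_incid_D hs hl)).unique ⟨hps, hpl⟩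
    ⟨R.meet_incid_left hs hl, R.meet_incid_right hs hl⟩

noncomputable def pointsEquivSpecialLines {l : Line} (hl : ¬R.Incid R.D l) :
    {p : Point // R.Incid p l} ≃ {s : Line // R.Incid R.D s} where
  toFun p := ⟨R.lineThroughD (R.ne_D_of_incid hl p.2), R.D_incid_lineThroughD _⟩
  invFun s := ⟨R.meet s.2 hl, R.meet_incid_right s.2 hl⟩
  left_inv p := Subtype.ext (R.eq_meet (R.D_incid_lineThroughD _) hl
    (R.incid_lineThroughD (R.ne_D_of_incid hl p.2)) p.2).symm
  right_inv s := Subtype.ext (R.eq_lineThroughD (R.ne_D_of_incid hl (R.meet_incid_right s.2 hl))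
    (R.meet_incid_left s.2 hl) s.2).symm

end ProjRect

/-- Every ordinary line has as many points as there are special lines; in particular
all ordinary lines have the same number of points. -/
theorem stmt_3 {Point Line : Type} (R : ProjRect Point Line) (l : Line)
    (hl : ¬R.Incid R.D l) :
    Nonempty ({p : Point // R.Incid p l} ≃ {s : Line // R.Incid R.D s}) :=
  ⟨R.pointsEquivSpecialLines hl⟩
end

section
/- In a finite projective rectangle of order (m,n) (i.e., with m+1 special lines and n+1 points on each special line), the number of lines through any ordinary point is n+1, of which exactly n are ordinary lines. -/
/-- A projective rectangle has order (m,n) if it has exactly m+1 special lines and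
each special line has exactly n+1 points. -/
def ProjRect.HasOrder {Point Line : Type} (R : ProjRect Point Line) (m n : ℕ) : Prop :=
  Set.ncard {l : Line | R.Incid R.D l} = m + 1 ∧
  ∀ s : Line, R.Incid R.D s → Set.ncard {p : Point | R.Incid p s} = n + 1

/-!
Let `p ≠ D`. Since not all points are collinear, some special line `s` misses `p`. Joining `p`
to the points of `s` is a bijection onto the lines through `p`: it is injective because two
points of `s` already span `s`, and surjective because every line through `p` meets `s` by (A5).
So `p` lies on `n + 1` lines, and exactly one of them, the line `pD`, is special.
-/

namespace ProjRect

variable {Point Line : Type} (R : ProjRect Point Line)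

theorem eq_of_incid_of_incid_s5 {p q : Point} (hpq : p ≠ q) {l l' : Line}
    (hpl : R.Incid p l) (hql : R.Incid q l) (hpl' : R.Incid p l') (hql' : R.Incid q l') :
    l = l' :=
  (R.A1 p q hpq).unique ⟨hpl, hql⟩ ⟨hpl', hql'⟩

theorem exists_not_incid (l : Line) : ∃ x : Point, ¬R.Incid x l := by
  obtain ⟨a, b, c, -, -, -, -, -, -, -, habc, -⟩ := R.A2
  by_contra! hall
  exact habc l ⟨hall a, hall b, hall c⟩

theorem exists_special_line_not_incid {p : Point} (hp : p ≠ R.D) :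
    ∃ s : Line, R.Incid R.D s ∧ ¬R.Incid p s := by
  obtain ⟨l₀, ⟨hpl₀, hDl₀⟩, -⟩ := R.A1 p R.D hp
  obtain ⟨x, hx⟩ := R.exists_not_incid l₀
  have hxD : x ≠ R.D := fun h => hx (h ▸ hDl₀)
  obtain ⟨s, ⟨hDs, hxs⟩, -⟩ := R.A1 R.D x hxD.symm
  refine ⟨s, hDs, fun hps => hx ?_⟩
  rwa [R.eq_of_incid_of_incid_s5 hp hpl₀ hDl₀ hps hDs]

theorem ncard_lines_through_eq_ncard_points_on {p : Point} {s : Line}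
    (hDs : R.Incid R.D s) (hps : ¬R.Incid p s) :
    {l : Line | R.Incid p l}.ncard = {q : Point | R.Incid q s}.ncard := by
  have hne : ∀ q, R.Incid q s → p ≠ q := fun q hq hpq => hps (hpq ▸ hq)
  symm
  refine Set.ncard_congr (fun q hq => (R.A1 p q (hne q hq)).exists.choose)
    (fun q hq => (R.A1 p q (hne q hq)).exists.choose_spec.1) ?_ ?_
  · intro q q' hq hq' hqq'
    obtain ⟨hpl, hql⟩ := (R.A1 p q (hne q hq)).exists.choose_spec
    obtain ⟨-, hq'l'⟩ := (R.A1 p q' (hne q' hq')).exists.choose_spec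
    rw [← hqq'] at hq'l'
    by_contra hne'
    rw [R.eq_of_incid_of_incid_s5 hne' hql hq'l' hq hq'] at hpl
    exact hps hpl
  · intro l hpl
    have hls : l ≠ s := fun h => hps (h ▸ hpl)
    obtain ⟨q, ⟨hqs, hql⟩, -⟩ := R.A5 s l hDs hls
    obtain ⟨hpl', hql'⟩ := (R.A1 p q (hne q hqs)).exists.choose_spec
    exact ⟨q, hqs, R.eq_of_incid_of_incid_s5 (hne q hqs) hpl' hql' hpl hql⟩

theorem ncard_ordinary_lines_through {p : Point} (hp : p ≠ R.D) :
    {l : Line | R.Incid p l ∧ ¬R.Incid R.D l}.ncard = {l : Line | R.Incid p l}.ncard - 1 := by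
  obtain ⟨l₀, ⟨hpl₀, hDl₀⟩, hl₀⟩ := R.A1 p R.D hp
  have hdiff : {l : Line | R.Incid p l ∧ ¬R.Incid R.D l} = {l : Line | R.Incid p l} \ {l₀} := by
    ext l
    simp only [Set.mem_ofPred_eq, Set.mem_sdiff, Set.mem_singleton_iff]
    exact and_congr_right fun hpl =>
      ⟨fun hDl h => hDl (h ▸ hDl₀), fun hl hDl => hl (hl₀ l ⟨hpl, hDl⟩)⟩
  rw [hdiff, Set.ncard_sdiff_singleton_of_mem (s := {l : Line | R.Incid p l}) hpl₀]

end ProjRect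

/-- In a finite projective rectangle of order (m,n), every ordinary point lies on
exactly n+1 lines, exactly n of which are ordinary. -/
theorem stmt_5 {Point Line : Type} (R : ProjRect Point Line) (m n : ℕ)
    (h : R.HasOrder m n) (p : Point) (hp : p ≠ R.D) :
    Set.ncard {l : Line | R.Incid p l} = n + 1 ∧
    Set.ncard {l : Line | R.Incid p l ∧ ¬R.Incid R.D l} = n := by
  obtain ⟨s, hDs, hps⟩ := R.exists_special_line_not_incid hp
  have hlines : Set.ncard {l : Line | R.Incid p l} = n + 1 := by
    rw [R.ncard_lines_through_eq_ncard_points_on hDs hps, h.2 s hDs]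
  refine ⟨hlines, ?_⟩
  rw [R.ncard_ordinary_lines_through hp, hlines, Nat.add_sub_cancel]
end

section
/- In a projective rectangle of order (m,n), every special line has at least as many points as every ordinary line; that is, n ≥ m. -/
/-
Let `s` be a special line and `l` any line. Projecting `l` onto `s` from a point `e` lying on
neither line is injective: two points of `l` with the same image would span a line through `e`
and that image, which would then be `l` itself, although `e ∉ l`. Hence `|l| ≤ |s|`.
If `l` is ordinary, then by (A5) every special line meets `l`, and distinct special lines meet
only in `D ∉ l`, so `t ↦ t ∩ l` is injective; composing with the projection embeds the `m + 1`
special lines into the `n + 1` points of `s`.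
-/

namespace ProjRect

variable {Point Line : Type}

theorem line_eq_of_incid (R : ProjRect Point Line) {p q : Point} (hpq : p ≠ q)
    {l l' : Line} (hp : R.Incid p l) (hq : R.Incid q l) (hp' : R.Incid p l')
    (hq' : R.Incid q l') : l = l' := by
  obtain ⟨k, -, hk⟩ := R.A1 p q hpq
  exact (hk l ⟨hp, hq⟩).trans (hk l' ⟨hp', hq'⟩).symm

theorem exists_three_ne_lines (R : ProjRect Point Line) :
    ∃ x y z : Line, x ≠ y ∧ x ≠ z ∧ y ≠ z := by
  obtain ⟨a, b, c, -, hab, hac, -, hbc, -, -, habc, -, -, -⟩ := R.A2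
  obtain ⟨x, ⟨hax, hbx⟩, -⟩ := R.A1 a b hab
  obtain ⟨y, ⟨hay, hcy⟩, -⟩ := R.A1 a c hac
  obtain ⟨z, ⟨hbz, hcz⟩, -⟩ := R.A1 b c hbc
  refine ⟨x, y, z, ?_, ?_, ?_⟩
  · rintro rfl; exact habc x ⟨hax, hbx, hcy⟩
  · rintro rfl; exact habc x ⟨hax, hbx, hcz⟩
  · rintro rfl; exact habc y ⟨hay, hbz, hcy⟩

theorem exists_line_ne_ne (R : ProjRect Point Line) (l s : Line) :
    ∃ k : Line, k ≠ l ∧ k ≠ s := by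
  obtain ⟨x, y, z, hxy, hxz, hyz⟩ := R.exists_three_ne_lines
  by_contra! h
  rcases eq_or_ne x l with rfl | hxl
  · exact hyz ((h y hxy.symm).trans (h z hxz.symm).symm)
  rcases eq_or_ne y l with rfl | hyl
  · exact hxz ((h x hxy).trans (h z hyz.symm).symm)
  exact hxy ((h x hxl).trans (h y hyl).symm)

theorem exists_incid_not_incid_not_incid (R : ProjRect Point Line) {k l s : Line}
    (hkl : k ≠ l) (hks : k ≠ s) :
    ∃ e : Point, R.Incid e k ∧ ¬R.Incid e l ∧ ¬R.Incid e s := by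
  obtain ⟨p, q, r, hpq, hpr, hqr, hp, hq, hr⟩ := R.A3 k
  -- `k` meets each of `l` and `s` in at most one of the three points `p, q, r`.
  have hle : ∀ {u v}, u ≠ v → R.Incid u k → R.Incid v k → R.Incid u l → ¬R.Incid v l :=
    fun huv hu hv hul hvl => hkl (R.line_eq_of_incid huv hu hv hul hvl)
  have hse : ∀ {u v}, u ≠ v → R.Incid u k → R.Incid v k → R.Incid u s → ¬R.Incid v s :=
    fun huv hu hv hus hvs => hks (R.line_eq_of_incid huv hu hv hus hvs)
  by_contra! h
  have := h p hp; have := h q hq; have := h r hr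
  have := hle hpq hp hq; have := hle hpr hp hr; have := hle hqr hq hr
  have := hse hpq hp hq; have := hse hpr hp hr; have := hse hqr hq hr
  tauto

theorem exists_not_incid_not_incid (R : ProjRect Point Line) (l s : Line) :
    ∃ e : Point, ¬R.Incid e l ∧ ¬R.Incid e s := by
  obtain ⟨k, hkl, hks⟩ := R.exists_line_ne_ne l s
  obtain ⟨e, -, he⟩ := R.exists_incid_not_incid_not_incid hkl hks
  exact ⟨e, he⟩

theorem exists_ordinary_line (R : ProjRect Point Line) : ∃ l : Line, ¬R.Incid R.D l := by
  obtain ⟨a, b, c, -, hab, hac, -, hbc, -, -, habc, -, -, -⟩ := R.A2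
  obtain ⟨x, ⟨hax, hbx⟩, -⟩ := R.A1 a b hab
  obtain ⟨y, ⟨hay, hcy⟩, -⟩ := R.A1 a c hac
  obtain ⟨z, ⟨hbz, hcz⟩, -⟩ := R.A1 b c hbc
  by_contra! h
  by_cases hDa : R.D = a
  · exact habc z ⟨hDa ▸ h z, hbz, hcz⟩
  · have hxy : x = y := R.line_eq_of_incid (Ne.symm hDa) hax (h x) hay (h y)
    exact habc x ⟨hax, hbx, hxy ▸ hcy⟩

theorem exists_injOn_points_special (R : ProjRect Point Line) {s : Line}
    (hs : R.Incid R.D s) (l : Line) :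
    ∃ f : Point → Point, Set.MapsTo f {p | R.Incid p l} {p | R.Incid p s} ∧
      Set.InjOn f {p | R.Incid p l} := by
  obtain ⟨e, hel, hes⟩ := R.exists_not_incid_not_incid l s
  have hproj : ∀ p ∈ {p | R.Incid p l}, ∃ x : Point,
      R.Incid x s ∧ ∃ k : Line, R.Incid e k ∧ R.Incid p k ∧ R.Incid x k := by
    intro p hp
    obtain ⟨k, ⟨hek, hpk⟩, -⟩ := R.A1 e p fun h => hel (h ▸ hp)
    obtain ⟨x, ⟨hxs, hxk⟩, -⟩ := R.A5 s k hs fun h => hes (h ▸ hek)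
    exact ⟨x, hxs, k, hek, hpk, hxk⟩
  have : Nonempty Point := ⟨R.D⟩
  choose! f hfs hf using hproj
  refine ⟨f, hfs, fun p hp q hq hpq => ?_⟩
  obtain ⟨k, hek, hpk, hxk⟩ := hf p hp
  obtain ⟨k', hek', hqk', hxk'⟩ := hf q hq
  have hef : e ≠ f p := fun h => hes (h ▸ hfs p hp)
  have hkk' : k = k' := R.line_eq_of_incid hef hek hxk hek' (hpq ▸ hxk')
  by_contra hne
  exact hel (R.line_eq_of_incid hne hpk (hkk' ▸ hqk') hp hq ▸ hek)

theorem exists_injOn_special_lines_points (R : ProjRect Point Line) {l : Line}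
    (hl : ¬R.Incid R.D l) :
    ∃ g : Line → Point, Set.MapsTo g {t | R.Incid R.D t} {p | R.Incid p l} ∧
      Set.InjOn g {t | R.Incid R.D t} := by
  have hmeet : ∀ t ∈ {t | R.Incid R.D t}, ∃ x : Point, R.Incid x t ∧ R.Incid x l := by
    intro t ht
    obtain ⟨x, hx, -⟩ := R.A5 t l ht fun h => hl (h ▸ ht)
    exact ⟨x, hx⟩
  have : Nonempty Point := ⟨R.D⟩
  choose! g hgt hgl using hmeet
  refine ⟨g, hgl, fun t ht t' ht' htt' => ?_⟩
  have hgD : R.D ≠ g t := fun h => hl (h ▸ hgl t ht)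
  exact R.line_eq_of_incid hgD ht (hgt t ht) ht' (htt' ▸ hgt t' ht')

end ProjRect

/-- In a projective rectangle of order (m,n), every special line has at least as many
points as every ordinary line; that is, n ≥ m. -/
theorem stmt_6 {Point Line : Type} (R : ProjRect Point Line) (m n : ℕ)
    (h : R.HasOrder m n) :
    (∀ s l : Line, R.Incid R.D s → ¬R.Incid R.D l →
      Set.ncard {p : Point | R.Incid p l} ≤ Set.ncard {p : Point | R.Incid p s}) ∧
    m ≤ n := by
  obtain ⟨hm, hn⟩ := h
  have hfin : ∀ s : Line, R.Incid R.D s → {p : Point | R.Incid p s}.Finite := fun s hs =>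
    Set.finite_of_ncard_ne_zero (by rw [hn s hs]; omega)
  refine ⟨fun s l hs hl => ?_, ?_⟩
  · obtain ⟨f, hf, hfinj⟩ := R.exists_injOn_points_special hs l
    exact Set.ncard_le_ncard_of_injOn f hf hfinj (hfin s hs)
  · obtain ⟨s, hs⟩ : {t : Line | R.Incid R.D t}.Nonempty :=
      Set.nonempty_of_ncard_ne_zero (by rw [hm]; omega)
    obtain ⟨l, hl⟩ := R.exists_ordinary_line
    obtain ⟨f, hf, hfinj⟩ := R.exists_injOn_points_special hs l
    obtain ⟨g, hg, hginj⟩ := R.exists_injOn_special_lines_points hl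
    have := Set.ncard_le_ncard_of_injOn (f ∘ g) (hf.comp hg) (hfinj.comp hginj hg) (hfin s hs)
    rw [hm, hn s hs] at this
    omega
end

section
/- In a projective rectangle, if two ordinary lines intersect in a point, then there is a unique full projective subplane containing both lines. -/
/-- A subplane of a projective rectangle: sets of points and lines which, with the
induced incidence, form a projective plane. -/
def ProjRect.IsSubplane {Point Line : Type} (R : ProjRect Point Line)
    (P' : Set Point) (L' : Set Line) : Prop :=
  (∀ p q, p ∈ P' → q ∈ P' → p ≠ q → ∃! l, l ∈ L' ∧ R.Incid p l ∧ R.Incid q l) ∧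
  (∀ l m, l ∈ L' → m ∈ L' → l ≠ m → ∃ x, x ∈ P' ∧ R.Incid x l ∧ R.Incid x m) ∧
  (∃ a b c d, a ∈ P' ∧ b ∈ P' ∧ c ∈ P' ∧ d ∈ P' ∧
    a ≠ b ∧ a ≠ c ∧ a ≠ d ∧ b ≠ c ∧ b ≠ d ∧ c ≠ d ∧
    (∀ l ∈ L', ¬(R.Incid a l ∧ R.Incid b l ∧ R.Incid c l)) ∧
    (∀ l ∈ L', ¬(R.Incid a l ∧ R.Incid b l ∧ R.Incid d l)) ∧
    (∀ l ∈ L', ¬(R.Incid a l ∧ R.Incid c l ∧ R.Incid d l)) ∧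
    (∀ l ∈ L', ¬(R.Incid b l ∧ R.Incid c l ∧ R.Incid d l)))

/-- A subplane is full if it contains every point of each ordinary line it contains. -/
def ProjRect.IsFull {Point Line : Type} (R : ProjRect Point Line)
    (P' : Set Point) (L' : Set Line) : Prop :=
  ∀ l ∈ L', ¬R.Incid R.D l → ∀ p, R.Incid p l → p ∈ P'

/-!
The plane is forced. Call an ordinary line a cross line if it avoids `p` and meets both `l1`
and `l2`. A full subplane through `l1`, `l2` contains every point of `l1` and `l2`, hence every
special line except the one through `p`, hence `D`, hence every cross line with all its points;
conversely each of its points off `l1 ∪ l2 ∪ {D}` is joined to some point of `l1` by an ordinary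
line of the subplane, which is a cross line. So its points are those of `l1`, `l2`, `D` and the
cross lines, and its lines are the lines joining two of them.

For existence, the restricted Pasch axiom (A6) shows that two cross lines meet, that a cross
line meets every ordinary line through `p` carrying a further such point, and that an ordinary
line through two such points either passes through `p` and is then contained in the point set,
or is itself a cross line.
-/

namespace ProjRect

variable {Point Line : Type}

def joins (R : ProjRect Point Line) (P : Set Point) : Set Line :=
  {l | ∃ x y, x ∈ P ∧ y ∈ P ∧ x ≠ y ∧ R.Incid x l ∧ R.Incid y l}

structure OrdinaryPair (R : ProjRect Point Line) (l1 l2 : Line) (p : Point) : Prop where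
  left_ordinary : ¬R.Incid R.D l1
  right_ordinary : ¬R.Incid R.D l2
  ne : l1 ≠ l2
  incid_left : R.Incid p l1
  incid_right : R.Incid p l2

def crossLines (R : ProjRect Point Line) (l1 l2 : Line) (p : Point) : Set Line :=
  {c | ¬R.Incid R.D c ∧ ¬R.Incid p c ∧ (∃ a, R.Incid a l1 ∧ R.Incid a c) ∧
    ∃ b, R.Incid b l2 ∧ R.Incid b c}

def planePoints (R : ProjRect Point Line) (l1 l2 : Line) (p : Point) : Set Point :=
  {x | R.Incid x l1 ∨ R.Incid x l2 ∨ x = R.D ∨ ∃ c ∈ R.crossLines l1 l2 p, R.Incid x c}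

variable {R : ProjRect Point Line}

theorem ne_of_incid_of_not_incid {a b : Point} {l : Line} (ha : R.Incid a l)
    (hb : ¬R.Incid b l) : a ≠ b :=
  fun h => hb (h ▸ ha)

theorem line_eq {a b : Point} {l m : Line} (hab : a ≠ b) (hal : R.Incid a l)
    (hbl : R.Incid b l) (ham : R.Incid a m) (hbm : R.Incid b m) : l = m :=
  (R.A1 a b hab).unique ⟨hal, hbl⟩ ⟨ham, hbm⟩

theorem exists_two_incid_ne (l : Line) (v : Point) :
    ∃ x y, x ≠ y ∧ x ≠ v ∧ y ≠ v ∧ R.Incid x l ∧ R.Incid y l := by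
  obtain ⟨x, y, z, hxy, hxz, hyz, hx, hy, hz⟩ := R.A3 l
  by_cases hxv : x = v
  · exact ⟨y, z, hyz, fun h => hxy (hxv.trans h.symm), fun h => hxz (hxv.trans h.symm), hy, hz⟩
  by_cases hyv : y = v
  · exact ⟨x, z, hxz, hxv, fun h => hyz (hyv.trans h.symm), hx, hz⟩
  exact ⟨x, y, hxy, hxv, hyv, hx, hy⟩

theorem mem_joins_of_forall_incid {P : Set Point} {l : Line}
    (h : ∀ x, R.Incid x l → x ∈ P) : l ∈ R.joins P := by
  obtain ⟨x, y, -, hxy, -, -, hx, hy, -⟩ := R.A3 l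
  exact ⟨x, y, h x hx, h y hy, hxy, hx, hy⟩

/-- (A6) with only two of its side conditions: each omitted one, when violated, already
exhibits a common point of `l3` and `l4`. -/
theorem pasch {l1 l2 l3 l4 : Line} {o a3 a4 b3 b4 : Point}
    (h1 : ¬R.Incid R.D l1) (h2 : ¬R.Incid R.D l2) (h12 : l1 ≠ l2)
    (ho1 : R.Incid o l1) (ho2 : R.Incid o l2)
    (ha3 : R.Incid a3 l1) (ha3' : R.Incid a3 l3) (ha4 : R.Incid a4 l1) (ha4' : R.Incid a4 l4)
    (hb3 : R.Incid b3 l2) (hb3' : R.Incid b3 l3) (hb4 : R.Incid b4 l2) (hb4' : R.Incid b4 l4)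
    (hab3 : a3 ≠ b3) (hab4 : a4 ≠ b4) : ∃ q, R.Incid q l3 ∧ R.Incid q l4 := by
  by_cases h34 : l3 = l4
  · exact ⟨a3, ha3', h34 ▸ ha3'⟩
  by_cases ha : a3 = a4
  · exact ⟨a3, ha3', ha ▸ ha4'⟩
  by_cases hb : b3 = b4
  · exact ⟨b3, hb3', hb ▸ hb4'⟩
  by_cases hab : a3 = b4
  · exact ⟨a3, ha3', hab ▸ hb4'⟩
  by_cases hba : a4 = b3
  · exact ⟨b3, hb3', hba ▸ ha4'⟩
  exact R.A6 l1 l2 l3 l4 o a3 a4 b3 b4 h1 h2 h12 ho1 ho2 h34 ha3 ha3' ha4 ha4' hb3 hb3' hb4 hb4'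
    ha hab3 hab hba hab4 hb

theorem exists_ordinary_line_of_not_incid {l : Line} {a b x : Point} (hab : a ≠ b)
    (ha : R.Incid a l) (hb : R.Incid b l) (hx : ¬R.Incid x l) (hxD : x ≠ R.D) :
    (∃ n, ¬R.Incid R.D n ∧ R.Incid x n ∧ R.Incid a n) ∨
      ∃ n, ¬R.Incid R.D n ∧ R.Incid x n ∧ R.Incid b n := by
  obtain ⟨na, hxa, hana⟩ := (R.A1 x a (ne_of_incid_of_not_incid ha hx).symm).exists
  obtain ⟨nb, hxb, hbnb⟩ := (R.A1 x b (ne_of_incid_of_not_incid hb hx).symm).exists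
  by_cases hDa : R.Incid R.D na
  · by_cases hDb : R.Incid R.D nb
    · have hab' : na = nb := line_eq hxD hxa hDa hxb hDb
      exact absurd (line_eq hab hana (hab' ▸ hbnb) ha hb ▸ hxa) hx
    · exact Or.inr ⟨nb, hDb, hxb, hbnb⟩
  · exact Or.inl ⟨na, hDa, hxa, hana⟩

theorem crossLines_comm (l1 l2 : Line) (p : Point) :
    R.crossLines l2 l1 p = R.crossLines l1 l2 p := by
  ext c
  simp only [crossLines, Set.mem_ofPred_eq]
  tauto

theorem planePoints_comm (l1 l2 : Line) (p : Point) :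
    R.planePoints l2 l1 p = R.planePoints l1 l2 p := by
  ext x
  simp only [planePoints, Set.mem_ofPred_eq, crossLines_comm]
  tauto

theorem mem_planePoints_of_mem_crossLines {l1 l2 c : Line} {p x : Point}
    (hc : c ∈ R.crossLines l1 l2 p) (hxc : R.Incid x c) : x ∈ R.planePoints l1 l2 p :=
  Or.inr (Or.inr (Or.inr ⟨c, hc, hxc⟩))

theorem mem_planePoints_cases {l1 l2 : Line} {p x : Point} (hx : x ∈ R.planePoints l1 l2 p)
    (hxD : x ≠ R.D) :
    R.Incid x l1 ∨ R.Incid x l2 ∨ ∃ c ∈ R.crossLines l1 l2 p, R.Incid x c := by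
  rcases hx with h | h | h | h
  · exact Or.inl h
  · exact Or.inr (Or.inl h)
  · exact absurd h hxD
  · exact Or.inr (Or.inr h)

namespace OrdinaryPair

variable {l1 l2 : Line} {p : Point}

theorem symm (hC : R.OrdinaryPair l1 l2 p) : R.OrdinaryPair l2 l1 p :=
  ⟨hC.right_ordinary, hC.left_ordinary, hC.ne.symm, hC.incid_right, hC.incid_left⟩

theorem eq_of_incid (hC : R.OrdinaryPair l1 l2 p) {q : Point} (hq1 : R.Incid q l1)
    (hq2 : R.Incid q l2) : q = p := by
  by_contra h
  exact hC.ne (line_eq h hq1 hC.incid_left hq2 hC.incid_right)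

theorem ne_of_incid (hC : R.OrdinaryPair l1 l2 p) {a b : Point} (ha : R.Incid a l1)
    (hb : R.Incid b l2) (hap : a ≠ p) : a ≠ b :=
  fun h => hap (hC.eq_of_incid ha (h ▸ hb))

theorem not_collinear (hC : R.OrdinaryPair l1 l2 p) {a a' b : Point} (haa : a ≠ a')
    (ha : R.Incid a l1) (ha' : R.Incid a' l1) (hb : R.Incid b l2) (hbp : b ≠ p) (l : Line) :
    ¬(R.Incid a l ∧ R.Incid a' l ∧ R.Incid b l) := by
  rintro ⟨hal, ha'l, hbl⟩
  exact hbp (hC.eq_of_incid (line_eq haa hal ha'l ha ha' ▸ hbl) hb)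

theorem exists_meet_of_mem_crossLines (hC : R.OrdinaryPair l1 l2 p) {c c' : Line}
    (hc : c ∈ R.crossLines l1 l2 p) (hc' : c' ∈ R.crossLines l1 l2 p) :
    ∃ q, R.Incid q c ∧ R.Incid q c' := by
  obtain ⟨-, hpc, ⟨a, ha, hac⟩, b, hb, hbc⟩ := hc
  obtain ⟨-, hpc', ⟨a', ha', ha'c'⟩, b', hb', hb'c'⟩ := hc'
  exact pasch hC.left_ordinary hC.right_ordinary hC.ne hC.incid_left hC.incid_right
    ha hac ha' ha'c' hb hbc hb' hb'c' (hC.ne_of_incid ha hb (ne_of_incid_of_not_incid hac hpc))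
    (hC.ne_of_incid ha' hb' (ne_of_incid_of_not_incid ha'c' hpc'))

theorem mem_crossLines_of_incid_pencil (hC : R.OrdinaryPair l1 l2 p) {c m n : Line}
    {x z b : Point} (hc : c ∈ R.crossLines l1 l2 p) (hm : ¬R.Incid R.D m)
    (hpm : R.Incid p m) (hxc : R.Incid x c) (hxm : R.Incid x m) (hzm : R.Incid z m)
    (hz1 : ¬R.Incid z l1) (hz2 : ¬R.Incid z l2) (hbc : R.Incid b c) (hb2 : R.Incid b l2)
    (hn : ¬R.Incid R.D n) (hzn : R.Incid z n) (hbn : R.Incid b n) :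
    n ∈ R.crossLines l1 l2 p := by
  obtain ⟨hcD, hpc, ⟨a, ha1, hac⟩, -⟩ := hc
  have hzp : z ≠ p := (ne_of_incid_of_not_incid hC.incid_left hz1).symm
  have hbp : b ≠ p := ne_of_incid_of_not_incid hbc hpc
  have hpn : ¬R.Incid p n := fun hpn => by
    have hnm : n = m := line_eq hzp hzn hpn hzm hpm
    exact hz2 (line_eq hbp (hnm ▸ hbn) hpm hb2 hC.incid_right ▸ hzm)
  obtain ⟨q, hq1, hqn⟩ := pasch hcD hm (fun h => hpc (h ▸ hpm)) hxc hxm hac ha1 hbc hbn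
    hpm hC.incid_left hzm hzn (ne_of_incid_of_not_incid hac hpc) (fun h => hz2 (h ▸ hb2))
  exact ⟨hn, hpn, ⟨q, hq1, hqn⟩, b, hb2, hbn⟩

theorem mem_planePoints_of_incid_pencil (hC : R.OrdinaryPair l1 l2 p) {m : Line} {x z : Point}
    (hm : ¬R.Incid R.D m) (hpm : R.Incid p m) (hxp : x ≠ p) (hxm : R.Incid x m)
    (hx : x ∈ R.planePoints l1 l2 p) (hzm : R.Incid z m) : z ∈ R.planePoints l1 l2 p := by
  rcases mem_planePoints_cases hx (ne_of_incid_of_not_incid hxm hm)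
    with hx1 | hx2 | ⟨c, hc, hxc⟩
  · exact Or.inl (line_eq hxp hxm hpm hx1 hC.incid_left ▸ hzm)
  · exact Or.inr (Or.inl (line_eq hxp hxm hpm hx2 hC.incid_right ▸ hzm))
  by_cases hz1 : R.Incid z l1
  · exact Or.inl hz1
  by_cases hz2 : R.Incid z l2
  · exact Or.inr (Or.inl hz2)
  by_cases hzc : R.Incid z c
  · exact mem_planePoints_of_mem_crossLines hc hzc
  have ⟨_, hpc, ⟨a, ha1, hac⟩, b, hb2, hbc⟩ := hc
  have hab : a ≠ b := hC.ne_of_incid ha1 hb2 (ne_of_incid_of_not_incid hac hpc)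
  rcases exists_ordinary_line_of_not_incid hab hac hbc hzc (ne_of_incid_of_not_incid hzm hm)
    with ⟨n, hn, hzn, han⟩ | ⟨n, hn, hzn, hbn⟩
  · rw [← planePoints_comm]
    rw [← crossLines_comm] at hc
    exact mem_planePoints_of_mem_crossLines
      (hC.symm.mem_crossLines_of_incid_pencil hc hm hpm hxc hxm hzm hz2 hz1 hac ha1 hn hzn han) hzn
  · exact mem_planePoints_of_mem_crossLines
      (hC.mem_crossLines_of_incid_pencil hc hm hpm hxc hxm hzm hz1 hz2 hbc hb2 hn hzn hbn) hzn

theorem exists_meet_right_of_incid_left (hC : R.OrdinaryPair l1 l2 p) {m : Line} {x y : Point}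
    (hm : ¬R.Incid R.D m) (hpm : ¬R.Incid p m) (hxy : x ≠ y) (hx1 : R.Incid x l1)
    (hxm : R.Incid x m) (hym : R.Incid y m) (hy : y ∈ R.planePoints l1 l2 p) :
    ∃ q, R.Incid q m ∧ R.Incid q l2 := by
  rcases mem_planePoints_cases hy (ne_of_incid_of_not_incid hym hm)
    with hy1 | hy2 | ⟨c, hc, hyc⟩
  · exact absurd (line_eq hxy hx1 hy1 hxm hym ▸ hC.incid_left) hpm
  · exact ⟨y, hym, hy2⟩
  by_cases hy2 : R.Incid y l2
  · exact ⟨y, hym, hy2⟩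
  obtain ⟨hcD, hpc, ⟨a, ha1, hac⟩, b, hb2, hbc⟩ := hc
  exact pasch hC.left_ordinary hcD (fun h => hpc (h ▸ hC.incid_left)) ha1 hac hx1 hxm
    hC.incid_left hC.incid_right hyc hym hbc hb2 hxy (ne_of_incid_of_not_incid hbc hpc).symm

theorem exists_meet_left_or_right (hC : R.OrdinaryPair l1 l2 p) {m : Line} {x y : Point}
    (hm : ¬R.Incid R.D m) (hxy : x ≠ y) (hxm : R.Incid x m) (hym : R.Incid y m)
    (hx : x ∈ R.planePoints l1 l2 p) (hy : y ∈ R.planePoints l1 l2 p) :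
    (∃ q, R.Incid q m ∧ R.Incid q l1) ∨ ∃ q, R.Incid q m ∧ R.Incid q l2 := by
  rcases mem_planePoints_cases hx (ne_of_incid_of_not_incid hxm hm)
    with hx1 | hx2 | ⟨cx, hcx, hxc⟩
  · exact Or.inl ⟨x, hxm, hx1⟩
  · exact Or.inr ⟨x, hxm, hx2⟩
  rcases mem_planePoints_cases hy (ne_of_incid_of_not_incid hym hm)
    with hy1 | hy2 | ⟨cy, hcy, hyc⟩
  · exact Or.inl ⟨y, hym, hy1⟩
  · exact Or.inr ⟨y, hym, hy2⟩
  obtain ⟨w, hwx, hwy⟩ := hC.exists_meet_of_mem_crossLines hcx hcy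
  obtain ⟨hDx, hpx, ⟨a, ha1, hax⟩, b, hb2, hbx⟩ := hcx
  obtain ⟨hDy, -, ⟨a', ha1', hay⟩, b', hb2', hby⟩ := hcy
  by_cases hcc : cx = cy
  · exact Or.inl ⟨a, line_eq hxy hxc (hcc ▸ hyc) hxm hym ▸ hax, ha1⟩
  -- `cx` and `cy` cannot meet `l1` and `l2` in the same two points
  by_cases haa : a = a'
  · have hbb : b ≠ b' := fun hbb => hcc <|
      line_eq (hC.ne_of_incid ha1 hb2 (ne_of_incid_of_not_incid hax hpx)) hax hbx
        (haa ▸ hay) (hbb ▸ hby)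
    exact Or.inr (pasch hDx hDy hcc hwx hwy hxc hxm hbx hb2 hyc hym hby hb2' hxy hbb)
  · exact Or.inl (pasch hDx hDy hcc hwx hwy hxc hxm hax ha1 hyc hym hay ha1' hxy haa)

theorem mem_crossLines_of_meet_left (hC : R.OrdinaryPair l1 l2 p) {m : Line} {x y q : Point}
    (hm : ¬R.Incid R.D m) (hpm : ¬R.Incid p m) (hxy : x ≠ y) (hxm : R.Incid x m)
    (hym : R.Incid y m) (hx : x ∈ R.planePoints l1 l2 p) (hy : y ∈ R.planePoints l1 l2 p)
    (hqm : R.Incid q m) (hq1 : R.Incid q l1) : m ∈ R.crossLines l1 l2 p := by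
  obtain ⟨u, hu, hqu, hum⟩ : ∃ u ∈ R.planePoints l1 l2 p, q ≠ u ∧ R.Incid u m := by
    by_cases hqx : q = x
    · exact ⟨y, hy, hqx ▸ hxy, hym⟩
    · exact ⟨x, hx, hqx, hxm⟩
  obtain ⟨r, hrm, hr2⟩ := hC.exists_meet_right_of_incid_left hm hpm hqu hq1 hqm hum hu
  exact ⟨hm, hpm, ⟨q, hq1, hqm⟩, r, hr2, hrm⟩

theorem mem_crossLines_of_two_points (hC : R.OrdinaryPair l1 l2 p) {m : Line} {x y : Point}
    (hm : ¬R.Incid R.D m) (hpm : ¬R.Incid p m) (hxy : x ≠ y) (hxm : R.Incid x m)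
    (hym : R.Incid y m) (hx : x ∈ R.planePoints l1 l2 p) (hy : y ∈ R.planePoints l1 l2 p) :
    m ∈ R.crossLines l1 l2 p := by
  rcases hC.exists_meet_left_or_right hm hxy hxm hym hx hy
    with ⟨q, hqm, hq1⟩ | ⟨q, hqm, hq2⟩
  · exact hC.mem_crossLines_of_meet_left hm hpm hxy hxm hym hx hy hqm hq1
  · rw [← planePoints_comm] at hx hy
    rw [← crossLines_comm]
    exact hC.symm.mem_crossLines_of_meet_left hm hpm hxy hxm hym hx hy hqm hq2

theorem exists_meet_of_mem_crossLines_of_incid (hC : R.OrdinaryPair l1 l2 p) {c m : Line}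
    {x : Point} (hc : c ∈ R.crossLines l1 l2 p) (hm : ¬R.Incid R.D m) (hpm : R.Incid p m)
    (hxp : x ≠ p) (hxm : R.Incid x m) (hx : x ∈ R.planePoints l1 l2 p) :
    ∃ q, R.Incid q c ∧ R.Incid q m := by
  have ⟨_, hpc, ⟨a, ha1, hac⟩, b, hb2, hbc⟩ := hc
  rcases mem_planePoints_cases hx (ne_of_incid_of_not_incid hxm hm)
    with hx1 | hx2 | ⟨cx, hcx, hxcx⟩
  · exact ⟨a, hac, line_eq hxp hx1 hC.incid_left hxm hpm ▸ ha1⟩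
  · exact ⟨b, hbc, line_eq hxp hx2 hC.incid_right hxm hpm ▸ hb2⟩
  by_cases hxc : R.Incid x c
  · exact ⟨x, hxc, hxm⟩
  obtain ⟨w, hwc, hwcx⟩ := hC.exists_meet_of_mem_crossLines hc hcx
  obtain ⟨hDx, hpx, ⟨ax, hax1, haxcx⟩, bx, hbx2, hbxcx⟩ := hcx
  have hwx : w ≠ x := fun h => hxc (h ▸ hwc)
  -- Pasch for the pair `l1, cx` or `l2, cx` cut by `c` and `m`: as `p ∉ c`, `w` is not on both.
  by_cases haw : a = w
  · have hbw : b ≠ w := haw ▸ (hC.ne_of_incid ha1 hb2 (ne_of_incid_of_not_incid hac hpc)).symm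
    exact pasch hC.right_ordinary hDx (fun h => hpx (h ▸ hC.incid_right)) hbx2 hbxcx hb2 hbc
      hC.incid_right hpm hwcx hwc hxcx hxm hbw hxp.symm
  · exact pasch hC.left_ordinary hDx (fun h => hpx (h ▸ hC.incid_left)) hax1 haxcx ha1 hac
      hC.incid_left hpm hwcx hwc hxcx hxm haw hxp.symm

theorem mem_joins_planePoints_cases (hC : R.OrdinaryPair l1 l2 p) {l : Line}
    (hl : l ∈ R.joins (R.planePoints l1 l2 p)) (hlD : ¬R.Incid R.D l) :
    (R.Incid p l ∧ ∃ x ≠ p, R.Incid x l ∧ x ∈ R.planePoints l1 l2 p) ∨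
      l ∈ R.crossLines l1 l2 p := by
  obtain ⟨x, y, hx, hy, hxy, hxl, hyl⟩ := hl
  by_cases hpl : R.Incid p l
  · by_cases hxp : x = p
    · exact Or.inl ⟨hpl, y, fun h => hxy (hxp.trans h.symm), hyl, hy⟩
    · exact Or.inl ⟨hpl, x, hxp, hxl, hx⟩
  · exact Or.inr (hC.mem_crossLines_of_two_points hlD hpl hxy hxl hyl hx hy)

theorem isFull_planePoints (hC : R.OrdinaryPair l1 l2 p) :
    R.IsFull (R.planePoints l1 l2 p) (R.joins (R.planePoints l1 l2 p)) := by
  intro l hl hlD z hzl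
  rcases hC.mem_joins_planePoints_cases hl hlD with ⟨hpl, x, hxp, hxl, hx⟩ | hc
  · exact hC.mem_planePoints_of_incid_pencil hlD hpl hxp hxl hx hzl
  · exact mem_planePoints_of_mem_crossLines hc hzl

theorem exists_meet_of_mem_joins (hC : R.OrdinaryPair l1 l2 p) {l m : Line}
    (hl : l ∈ R.joins (R.planePoints l1 l2 p)) (hm : m ∈ R.joins (R.planePoints l1 l2 p))
    (hlm : l ≠ m) : ∃ q, R.Incid q l ∧ R.Incid q m := by
  by_cases hlD : R.Incid R.D l
  · exact (R.A5 l m hlD hlm.symm).exists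
  by_cases hmD : R.Incid R.D m
  · obtain ⟨q, hqm, hql⟩ := (R.A5 m l hmD hlm).exists
    exact ⟨q, hql, hqm⟩
  rcases hC.mem_joins_planePoints_cases hl hlD with ⟨hpl, x, hxp, hxl, hx⟩ | hcl <;>
    rcases hC.mem_joins_planePoints_cases hm hmD with ⟨hpm, y, hyp, hym, hy⟩ | hcm
  · exact ⟨p, hpl, hpm⟩
  · obtain ⟨q, hqm, hql⟩ := hC.exists_meet_of_mem_crossLines_of_incid hcm hlD hpl hxp hxl hx
    exact ⟨q, hql, hqm⟩
  · exact hC.exists_meet_of_mem_crossLines_of_incid hcl hmD hpm hyp hym hy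
  · exact hC.exists_meet_of_mem_crossLines hcl hcm

theorem isSubplane_planePoints (hC : R.OrdinaryPair l1 l2 p) :
    R.IsSubplane (R.planePoints l1 l2 p) (R.joins (R.planePoints l1 l2 p)) := by
  refine ⟨fun x y hx hy hxy => ?_, fun l m hl hm hlm => ?_, ?_⟩
  · obtain ⟨l, hxl, hyl⟩ := (R.A1 x y hxy).exists
    exact ⟨l, ⟨⟨x, y, hx, hy, hxy, hxl, hyl⟩, hxl, hyl⟩,
      fun l' hl' => line_eq hxy hl'.2.1 hl'.2.2 hxl hyl⟩
  · obtain ⟨q, hql, hqm⟩ := hC.exists_meet_of_mem_joins hl hm hlm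
    by_cases hlD : R.Incid R.D l
    · by_cases hmD : R.Incid R.D m
      · exact ⟨R.D, Or.inr (Or.inr (Or.inl rfl)), hlD, hmD⟩
      · exact ⟨q, hC.isFull_planePoints m hm hmD q hqm, hql, hqm⟩
    · exact ⟨q, hC.isFull_planePoints l hl hlD q hql, hql, hqm⟩
  · obtain ⟨a, a', haa, hap, ha'p, ha, ha'⟩ := exists_two_incid_ne (R := R) l1 p
    obtain ⟨b, b', hbb, hbp, hb'p, hb, hb'⟩ := exists_two_incid_ne (R := R) l2 p
    refine ⟨a, a', b, b', Or.inl ha, Or.inl ha', Or.inr (Or.inl hb), Or.inr (Or.inl hb'), haa,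
      hC.ne_of_incid ha hb hap, hC.ne_of_incid ha hb' hap, hC.ne_of_incid ha' hb ha'p,
      hC.ne_of_incid ha' hb' ha'p, hbb, fun l _ => hC.not_collinear haa ha ha' hb hbp l,
      fun l _ => hC.not_collinear haa ha ha' hb' hb'p l, fun l _ h => ?_, fun l _ h => ?_⟩
    · exact hC.symm.not_collinear hbb hb hb' ha hap l ⟨h.2.1, h.2.2, h.1⟩
    · exact hC.symm.not_collinear hbb hb hb' ha' ha'p l ⟨h.2.1, h.2.2, h.1⟩

end OrdinaryPair

namespace IsSubplane

variable {P : Set Point} {L : Set Line}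

theorem joins_subset (hsub : R.IsSubplane P L) : R.joins P ⊆ L := by
  rintro l ⟨x, y, hx, hy, hxy, hxl, hyl⟩
  obtain ⟨n, ⟨hnL, hxn, hyn⟩, -⟩ := hsub.1 x y hx hy hxy
  exact line_eq hxy hxn hyn hxl hyl ▸ hnL

theorem subset_joins (hsub : R.IsSubplane P L) (hfull : R.IsFull P L) {l0 : Line}
    (hl0 : l0 ∈ L) (h0 : ¬R.Incid R.D l0) (hD : R.D ∈ P) : L ⊆ R.joins P := by
  intro l hl
  by_cases hlD : R.Incid R.D l
  · obtain ⟨u, hu, hul, hul0⟩ := hsub.2.1 l l0 hl hl0 fun h => h0 (h ▸ hlD)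
    exact ⟨R.D, u, hD, hu, fun h => h0 (h ▸ hul0), hlD, hul⟩
  · exact mem_joins_of_forall_incid (hfull l hl hlD)

end IsSubplane

namespace OrdinaryPair

variable {l1 l2 : Line} {p : Point} {P : Set Point} {L : Set Line}

theorem special_mem (hC : R.OrdinaryPair l1 l2 p) (hsub : R.IsSubplane P L)
    (hfull : R.IsFull P L) (hl1 : l1 ∈ L) (hl2 : l2 ∈ L) {s : Line} {a : Point}
    (hDs : R.Incid R.D s) (has : R.Incid a s) (ha1 : R.Incid a l1) (hap : a ≠ p) : s ∈ L := by
  obtain ⟨b, hbs, hb2⟩ := (R.A5 s l2 hDs fun h => hC.right_ordinary (h ▸ hDs)).exists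
  exact hsub.joins_subset ⟨a, b, hfull l1 hl1 hC.left_ordinary a ha1,
    hfull l2 hl2 hC.right_ordinary b hb2, hC.ne_of_incid ha1 hb2 hap, has, hbs⟩

theorem D_mem (hC : R.OrdinaryPair l1 l2 p) (hsub : R.IsSubplane P L) (hfull : R.IsFull P L)
    (hl1 : l1 ∈ L) (hl2 : l2 ∈ L) : R.D ∈ P := by
  obtain ⟨a, a', haa, hap, ha'p, ha, ha'⟩ := exists_two_incid_ne (R := R) l1 p
  obtain ⟨s, hDs, has⟩ :=
    (R.A1 R.D a (ne_of_incid_of_not_incid ha hC.left_ordinary).symm).exists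
  obtain ⟨s', hDs', ha's'⟩ :=
    (R.A1 R.D a' (ne_of_incid_of_not_incid ha' hC.left_ordinary).symm).exists
  have hss : s ≠ s' := fun h => hC.left_ordinary (line_eq haa has (h ▸ ha's') ha ha' ▸ hDs)
  obtain ⟨w, hw, hws, hws'⟩ := hsub.2.1 s s' (hC.special_mem hsub hfull hl1 hl2 hDs has ha hap)
    (hC.special_mem hsub hfull hl1 hl2 hDs' ha's' ha' ha'p) hss
  by_contra hD
  exact hss (line_eq (ne_of_mem_of_not_mem hw hD) hws hDs hws' hDs')

theorem subset_planePoints (hC : R.OrdinaryPair l1 l2 p) (hsub : R.IsSubplane P L)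
    (hfull : R.IsFull P L) (hl1 : l1 ∈ L) (hl2 : l2 ∈ L) : P ⊆ R.planePoints l1 l2 p := by
  intro x hx
  by_cases hx1 : R.Incid x l1
  · exact Or.inl hx1
  by_cases hx2 : R.Incid x l2
  · exact Or.inr (Or.inl hx2)
  by_cases hxD : x = R.D
  · exact Or.inr (Or.inr (Or.inl hxD))
  suffices ∀ u n, R.Incid u l1 → u ≠ p → ¬R.Incid R.D n → R.Incid x n → R.Incid u n →
      x ∈ R.planePoints l1 l2 p by
    obtain ⟨a, a', haa, hap, ha'p, ha, ha'⟩ := exists_two_incid_ne (R := R) l1 p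
    rcases exists_ordinary_line_of_not_incid haa ha ha' hx1 hxD
      with ⟨n, hn, hxn, han⟩ | ⟨n, hn, hxn, ha'n⟩
    · exact this a n ha hap hn hxn han
    · exact this a' n ha' ha'p hn hxn ha'n
  intro u n hu1 hup hn hxn hun
  have hpn : ¬R.Incid p n := fun hpn => hx1 (line_eq hup hun hpn hu1 hC.incid_left ▸ hxn)
  have hnL : n ∈ L := hsub.joins_subset ⟨x, u, hx, hfull l1 hl1 hC.left_ordinary u hu1,
    fun h => hx1 (h ▸ hu1), hxn, hun⟩
  obtain ⟨v, -, hvn, hv2⟩ := hsub.2.1 n l2 hnL hl2 fun h => hx2 (h ▸ hxn)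
  exact mem_planePoints_of_mem_crossLines ⟨hn, hpn, ⟨u, hu1, hun⟩, v, hv2, hvn⟩ hxn

theorem planePoints_subset (hC : R.OrdinaryPair l1 l2 p) (hsub : R.IsSubplane P L)
    (hfull : R.IsFull P L) (hl1 : l1 ∈ L) (hl2 : l2 ∈ L) (hD : R.D ∈ P) :
    R.planePoints l1 l2 p ⊆ P := by
  rintro x (hx1 | hx2 | rfl | ⟨c, ⟨hcD, hpc, ⟨a, ha1, hac⟩, b, hb2, hbc⟩, hxc⟩)
  · exact hfull l1 hl1 hC.left_ordinary x hx1
  · exact hfull l2 hl2 hC.right_ordinary x hx2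
  · exact hD
  · have hcL : c ∈ L := hsub.joins_subset ⟨a, b, hfull l1 hl1 hC.left_ordinary a ha1,
      hfull l2 hl2 hC.right_ordinary b hb2,
      hC.ne_of_incid ha1 hb2 (ne_of_incid_of_not_incid hac hpc), hac, hbc⟩
    exact hfull c hcL hcD x hxc

end OrdinaryPair

end ProjRect

/-- Two intersecting ordinary lines lie in a unique full projective subplane. -/
theorem stmt_9 {Point Line : Type} (R : ProjRect Point Line) (l1 l2 : Line)
    (h1 : ¬R.Incid R.D l1) (h2 : ¬R.Incid R.D l2) (hne : l1 ≠ l2)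
    (p : Point) (hp1 : R.Incid p l1) (hp2 : R.Incid p l2) :
    ∃! π : Set Point × Set Line,
      R.IsSubplane π.1 π.2 ∧ R.IsFull π.1 π.2 ∧ l1 ∈ π.2 ∧ l2 ∈ π.2 := by
  have hC : R.OrdinaryPair l1 l2 p := ⟨h1, h2, hne, hp1, hp2⟩
  refine ⟨(R.planePoints l1 l2 p, R.joins (R.planePoints l1 l2 p)),
    ⟨hC.isSubplane_planePoints, hC.isFull_planePoints,
      ProjRect.mem_joins_of_forall_incid fun _ => Or.inl,
      ProjRect.mem_joins_of_forall_incid fun _ hx => Or.inr (Or.inl hx)⟩, ?_⟩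
  rintro ⟨P, L⟩ ⟨hsub, hfull, hl1, hl2⟩
  have hD : R.D ∈ P := hC.D_mem hsub hfull hl1 hl2
  have hP : P = R.planePoints l1 l2 p := (hC.subset_planePoints hsub hfull hl1 hl2).antisymm
    (hC.planePoints_subset hsub hfull hl1 hl2 hD)
  have hL : L = R.joins P := (hsub.subset_joins hfull hl1 h1 hD).antisymm hsub.joins_subset
  rw [hL, hP]
end

section
/- In a projective rectangle, given three noncollinear ordinary points, there is a unique full projective subplane containing all three points. -/
/-!
Among the three lines joining the given points at most one is special, so two of them are
ordinary lines `l`, `m` meeting at one of the points, `c`. Call a line a transversal if it misses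
`c` but meets both `l` and `m`. The full subplane generated by `l` and `m` has as points `c`, `D`
and the points of the ordinary transversals, and as lines the lines joining two of its points.
The restricted Pasch axiom (A6), applied either to two ordinary transversals or to an ordinary
transversal together with an ordinary line through `c`, shows that a line joining two of these
points is a transversal or passes through `c`; this gives the plane axioms and fullness.
Conversely, a full subplane containing `l` and `m` contains every transversal, hence `D` (where
two special transversals meet), and each of its points lies on an ordinary transversal.
-/

namespace ProjRect

variable {Point Line : Type} {R : ProjRect Point Line}

theorem line_eq_of_incid_s10 {p q : Point} {e f : Line} (hpq : p ≠ q) (hpe : R.Incid p e)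
    (hqe : R.Incid q e) (hpf : R.Incid p f) (hqf : R.Incid q f) : e = f :=
  (R.A1 p q hpq).unique ⟨hpe, hqe⟩ ⟨hpf, hqf⟩

theorem point_eq_of_incid {p q : Point} {e f : Line} (hef : e ≠ f) (hpe : R.Incid p e)
    (hpf : R.Incid p f) (hqe : R.Incid q e) (hqf : R.Incid q f) : p = q :=
  by_contra fun hpq => hef (line_eq_of_incid_s10 hpq hpe hqe hpf hqf)

theorem ne_of_incid_of_not_incid_s10 {p q : Point} {e : Line} (hpe : R.Incid p e)
    (hqe : ¬R.Incid q e) : p ≠ q :=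
  fun h => hqe (h ▸ hpe)

theorem not_incid_D_of_ne {p : Point} {e f : Line} (hpD : p ≠ R.D) (hef : e ≠ f)
    (hpe : R.Incid p e) (hpf : R.Incid p f) (hDe : R.Incid R.D e) : ¬R.Incid R.D f :=
  fun hDf => hef (line_eq_of_incid_s10 hpD hpe hDe hpf hDf)

theorem exists_line {p q : Point} (hpq : p ≠ q) : ∃ e : Line, R.Incid p e ∧ R.Incid q e :=
  (R.A1 p q hpq).exists

theorem exists_incid_ne_ne (e : Line) (a b : Point) :
    ∃ x, R.Incid x e ∧ x ≠ a ∧ x ≠ b := by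
  obtain ⟨p, q, r, hpq, hpr, hqr, hp, hq, hr⟩ := R.A3 e
  by_contra! h
  rcases eq_or_ne p a with rfl | hpa
  · exact hqr ((h q hq hpq.symm).trans (h r hr hpr.symm).symm)
  rcases eq_or_ne q a with rfl | hqa
  · exact hpr ((h p hp hpq).trans (h r hr hqr.symm).symm)
  · exact hpq ((h p hp hpa).trans (h q hq hqa).symm)

theorem exists_pair_incid_ne (e : Line) (a : Point) :
    ∃ x y, R.Incid x e ∧ R.Incid y e ∧ x ≠ a ∧ y ≠ a ∧ x ≠ y := by
  obtain ⟨x, hx, hxa, -⟩ := exists_incid_ne_ne (R := R) e a a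
  obtain ⟨y, hy, hya, hyx⟩ := exists_incid_ne_ne (R := R) e a x
  exact ⟨x, y, hx, hy, hxa, hya, hyx.symm⟩

theorem exists_incid_ne_not_incid {e f : Line} (hef : e ≠ f) (a : Point) :
    ∃ x, R.Incid x e ∧ x ≠ a ∧ ¬R.Incid x f := by
  by_cases hmeet : ∃ b, R.Incid b e ∧ R.Incid b f
  · obtain ⟨b, hbe, hbf⟩ := hmeet
    obtain ⟨x, hxe, hxa, hxb⟩ := exists_incid_ne_ne (R := R) e a b
    exact ⟨x, hxe, hxa, fun hxf => hxb (point_eq_of_incid hef hxe hxf hbe hbf)⟩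
  · obtain ⟨x, hxe, hxa, -⟩ := exists_incid_ne_ne (R := R) e a a
    exact ⟨x, hxe, hxa, fun hxf => hmeet ⟨x, hxe, hxf⟩⟩

def spannedLines (R : ProjRect Point Line) (P : Set Point) : Set Line :=
  {e | ∃ p ∈ P, ∃ q ∈ P, p ≠ q ∧ R.Incid p e ∧ R.Incid q e}

section Subplane

variable {P : Set Point} {L : Set Line}

theorem IsSubplane.mem_of_incid (h : R.IsSubplane P L) {p q : Point} {e : Line} (hp : p ∈ P)
    (hq : q ∈ P) (hpq : p ≠ q) (hpe : R.Incid p e) (hqe : R.Incid q e) : e ∈ L := by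
  obtain ⟨f, ⟨hf, hpf, hqf⟩, -⟩ := h.1 p q hp hq hpq
  rwa [line_eq_of_incid_s10 hpq hpf hqf hpe hqe] at hf

/-- If `e` carried at most one point of the subplane, it would meet the sides `ab`, `ac`, `cd`
of the quadrangle in one and the same point, which forces `a`, `c`, `d` or `a`, `b`, `c` to be
collinear. -/
theorem IsSubplane.mem_spannedLines (h : R.IsSubplane P L) {e : Line} (he : e ∈ L) :
    e ∈ R.spannedLines P := by
  by_contra hspan
  have hsub : ∀ p ∈ P, ∀ q ∈ P, R.Incid p e → R.Incid q e → p = q :=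
    fun p hp q hq hpe hqe => by_contra fun hpq => hspan ⟨p, hp, q, hq, hpq, hpe, hqe⟩
  have hmeet : ∀ {f : Line} {x y : Point}, f ∈ L → x ∈ P → y ∈ P → x ≠ y →
      R.Incid x f → R.Incid y f → ∃ r ∈ P, R.Incid r e ∧ R.Incid r f :=
    fun hf hx hy hxy hxf hyf => h.2.1 e _ he hf
      (by rintro rfl; exact hxy (hsub _ hx _ hy hxf hyf))
  obtain ⟨a, b, c, d, ha, hb, hc, hd, hab, hac, -, -, -, hcd, habc, -, hacd, -⟩ := h.2.2
  obtain ⟨fab, ⟨hfab, hafab, hbfab⟩, -⟩ := h.1 a b ha hb hab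
  obtain ⟨fac, ⟨hfac, hafac, hcfac⟩, -⟩ := h.1 a c ha hc hac
  obtain ⟨fcd, ⟨hfcd, hcfcd, hdfcd⟩, -⟩ := h.1 c d hc hd hcd
  obtain ⟨x, hx, hxe, hxfab⟩ := hmeet hfab ha hb hab hafab hbfab
  obtain ⟨y, hy, hye, hyfac⟩ := hmeet hfac ha hc hac hafac hcfac
  obtain ⟨z, hz, hze, hzfcd⟩ := hmeet hfcd hc hd hcd hcfcd hdfcd
  obtain rfl := hsub _ hx _ hy hxe hye
  obtain rfl := hsub _ hx _ hz hxe hze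
  by_cases hxa : x = a
  · subst hxa
    exact hacd fcd hfcd ⟨hzfcd, hcfcd, hdfcd⟩
  · have hfab_fac := line_eq_of_incid_s10 hxa hxfab hafab hyfac hafac
    exact habc fab hfab ⟨hafab, hbfab, hfab_fac ▸ hcfac⟩

theorem IsSubplane.eq_spannedLines (h : R.IsSubplane P L) : L = R.spannedLines P :=
  Set.Subset.antisymm (fun _ he => h.mem_spannedLines he)
    fun _ ⟨_, hp, _, hq, hpq, hpe, hqe⟩ => h.mem_of_incid hp hq hpq hpe hqe

end Subplane

structure OrdinaryCross (R : ProjRect Point Line) (l m : Line) (c : Point) : Prop where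
  incid_left : R.Incid c l
  incid_right : R.Incid c m
  ne : l ≠ m
  left_ordinary : ¬R.Incid R.D l
  right_ordinary : ¬R.Incid R.D m

def IsTransversal (R : ProjRect Point Line) (l m : Line) (c : Point) (n : Line) : Prop :=
  ¬R.Incid c n ∧ (∃ x, R.Incid x l ∧ R.Incid x n) ∧ ∃ y, R.Incid y m ∧ R.Incid y n

/-- Special transversals are left out: a full subplane need not contain every point of its
special lines. -/
def crossPoints (R : ProjRect Point Line) (l m : Line) (c : Point) : Set Point :=
  {q | q = c ∨ q = R.D ∨ ∃ n, R.IsTransversal l m c n ∧ ¬R.Incid R.D n ∧ R.Incid q n}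

section Cross

variable {l m : Line} {c : Point}

theorem OrdinaryCross.symm (S : R.OrdinaryCross l m c) : R.OrdinaryCross m l c :=
  ⟨S.incid_right, S.incid_left, S.ne.symm, S.right_ordinary, S.left_ordinary⟩

theorem OrdinaryCross.eq_of_incid (S : R.OrdinaryCross l m c) {x : Point} (hxl : R.Incid x l)
    (hxm : R.Incid x m) : x = c :=
  point_eq_of_incid S.ne hxl hxm S.incid_left S.incid_right

theorem OrdinaryCross.ne_of_incid (S : R.OrdinaryCross l m c) {x y : Point}
    (hxl : R.Incid x l) (hym : R.Incid y m) (hxc : x ≠ c) : x ≠ y := by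
  rintro rfl
  exact hxc (S.eq_of_incid hxl hym)

theorem OrdinaryCross.not_collinear (S : R.OrdinaryCross l m c) {x₁ x₂ y : Point} {e : Line}
    (hx₁ : R.Incid x₁ l) (hx₂ : R.Incid x₂ l) (hx₁₂ : x₁ ≠ x₂) (hym : R.Incid y m)
    (hyc : y ≠ c) : ¬(R.Incid x₁ e ∧ R.Incid x₂ e ∧ R.Incid y e) := by
  rintro ⟨hx₁e, hx₂e, hye⟩
  obtain rfl := line_eq_of_incid_s10 hx₁₂ hx₁e hx₂e hx₁ hx₂
  exact hyc (S.eq_of_incid hye hym)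

theorem IsTransversal.symm {n : Line} (h : R.IsTransversal l m c n) : R.IsTransversal m l c n :=
  ⟨h.1, h.2.2, h.2.1⟩

theorem center_mem_crossPoints : c ∈ R.crossPoints l m c := Or.inl rfl

theorem D_mem_crossPoints : R.D ∈ R.crossPoints l m c := Or.inr (Or.inl rfl)

theorem mem_crossPoints_of_isTransversal {n : Line} {q : Point} (hn : R.IsTransversal l m c n)
    (hnD : ¬R.Incid R.D n) (hqn : R.Incid q n) : q ∈ R.crossPoints l m c :=
  Or.inr (Or.inr ⟨n, hn, hnD, hqn⟩)

theorem crossPoints_comm : R.crossPoints m l c = R.crossPoints l m c := by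
  have hsub : ∀ {l m : Line}, R.crossPoints m l c ⊆ R.crossPoints l m c := by
    rintro l m q (rfl | rfl | ⟨n, hn, hnD, hqn⟩)
    exacts [center_mem_crossPoints, D_mem_crossPoints,
      mem_crossPoints_of_isTransversal hn.symm hnD hqn]
  exact Set.Subset.antisymm hsub hsub

theorem exists_isTransversal_of_mem_crossPoints {q : Point} (hq : q ∈ R.crossPoints l m c)
    (hqc : q ≠ c) (hqD : q ≠ R.D) :
    ∃ n, R.IsTransversal l m c n ∧ ¬R.Incid R.D n ∧ R.Incid q n :=
  (hq.resolve_left hqc).resolve_left hqD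

theorem isTransversal_of_incid_D (S : R.OrdinaryCross l m c) {e : Line} (hDe : R.Incid R.D e)
    (hce : ¬R.Incid c e) : R.IsTransversal l m c e := by
  obtain ⟨x, hx, -⟩ := R.A5 e l hDe fun h => S.left_ordinary (h ▸ hDe)
  obtain ⟨y, hy, -⟩ := R.A5 e m hDe fun h => S.right_ordinary (h ▸ hDe)
  exact ⟨hce, ⟨x, hx.2, hx.1⟩, y, hy.2, hy.1⟩

theorem mem_crossPoints_of_incid_left (S : R.OrdinaryCross l m c) {q : Point}
    (hql : R.Incid q l) : q ∈ R.crossPoints l m c := by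
  by_cases hqc : q = c
  · exact hqc ▸ center_mem_crossPoints
  have hqD : q ≠ R.D := ne_of_incid_of_not_incid_s10 hql S.left_ordinary
  obtain ⟨s, hqs, hDs⟩ := exists_line hqD
  obtain ⟨y, hym, hyc, hys⟩ :=
    exists_incid_ne_not_incid (e := m) (fun h => S.right_ordinary (h ▸ hDs)) c
  have hqy : q ≠ y := S.ne_of_incid hql hym hqc
  obtain ⟨n, hqn, hyn⟩ := exists_line hqy
  have hcn : ¬R.Incid c n := fun hcn =>
    hyc (S.eq_of_incid (line_eq_of_incid_s10 hqc hqn hcn hql S.incid_left ▸ hyn) hym)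
  have hnD : ¬R.Incid R.D n := fun hDn => hys (line_eq_of_incid_s10 hqD hqn hDn hqs hDs ▸ hyn)
  exact mem_crossPoints_of_isTransversal ⟨hcn, ⟨q, hql, hqn⟩, y, hym, hyn⟩ hnD hqn

theorem mem_crossPoints_of_incid_right (S : R.OrdinaryCross l m c) {q : Point}
    (hqm : R.Incid q m) : q ∈ R.crossPoints l m c :=
  crossPoints_comm ▸ mem_crossPoints_of_incid_left S.symm hqm

theorem IsTransversal.exists_meet (S : R.OrdinaryCross l m c) {n₁ n₂ : Line}
    (h₁ : R.IsTransversal l m c n₁) (h₂ : R.IsTransversal l m c n₂) :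
    ∃ r, R.Incid r n₁ ∧ R.Incid r n₂ := by
  obtain ⟨hc₁, ⟨x₁, hx₁l, hx₁n⟩, y₁, hy₁m, hy₁n⟩ := h₁
  obtain ⟨hc₂, ⟨x₂, hx₂l, hx₂n⟩, y₂, hy₂m, hy₂n⟩ := h₂
  by_cases hn : n₁ = n₂
  · exact ⟨x₁, hx₁n, hn ▸ hx₁n⟩
  by_cases hx : x₁ = x₂
  · exact ⟨x₁, hx₁n, hx ▸ hx₂n⟩
  by_cases hy : y₁ = y₂
  · exact ⟨y₁, hy₁n, hy ▸ hy₂n⟩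
  have hx₁c := ne_of_incid_of_not_incid_s10 hx₁n hc₁
  have hx₂c := ne_of_incid_of_not_incid_s10 hx₂n hc₂
  exact R.A6 l m n₁ n₂ c x₁ x₂ y₁ y₂ S.left_ordinary S.right_ordinary S.ne S.incid_left
    S.incid_right hn hx₁l hx₁n hx₂l hx₂n hy₁m hy₁n hy₂m hy₂n hx (S.ne_of_incid hx₁l hy₁m hx₁c)
    (S.ne_of_incid hx₁l hy₂m hx₁c) (S.ne_of_incid hx₂l hy₁m hx₂c)
    (S.ne_of_incid hx₂l hy₂m hx₂c) hy

theorem exists_incid_left_of_incid_right (S : R.OrdinaryCross l m c) {n e : Line} {q t : Point}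
    (hn : R.IsTransversal l m c n) (hnD : ¬R.Incid R.D n) (hce : ¬R.Incid c e)
    (hqe : R.Incid q e) (hqn : R.Incid q n) (hql : ¬R.Incid q l) (hte : R.Incid t e)
    (htm : R.Incid t m) (hqt : q ≠ t) : ∃ x, R.Incid x l ∧ R.Incid x e := by
  obtain ⟨hcn, ⟨x, hxl, hxn⟩, y, hym, hyn⟩ := hn
  have hxc := ne_of_incid_of_not_incid_s10 hxn hcn
  exact R.A6 n m l e y x q c t hnD S.right_ordinary (fun h => hcn (h ▸ S.incid_right)) hyn hym
    (fun h => hce (h ▸ S.incid_left)) hxn hxl hqn hqe S.incid_right S.incid_left htm hte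
    (ne_of_incid_of_not_incid_s10 hxl hql) hxc (S.ne_of_incid hxl htm hxc)
    (ne_of_incid_of_not_incid_s10 hqe hce) hqt (ne_of_incid_of_not_incid_s10 hte hce).symm

theorem exists_incid_left_of_incid_transversals (S : R.OrdinaryCross l m c)
    {np nq e : Line} {p q : Point} (hnp : R.IsTransversal l m c np) (hDnp : ¬R.Incid R.D np)
    (hnq : R.IsTransversal l m c nq) (hDnq : ¬R.Incid R.D nq) (hnpq : np ≠ nq)
    (hpnp : R.Incid p np) (hqnq : R.Incid q nq) (hpe : R.Incid p e) (hqe : R.Incid q e)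
    (hce : ¬R.Incid c e) (hpq : p ≠ q) (hpl : ¬R.Incid p l) (hql : ¬R.Incid q l)
    (hpm : ¬R.Incid p m) (hqm : ¬R.Incid q m) : ∃ x, R.Incid x l ∧ R.Incid x e := by
  obtain ⟨ρ, hρp, hρq⟩ := hnp.exists_meet S hnq
  obtain ⟨hcnp, ⟨xp, hxpl, hxpn⟩, yp, hypm, hypn⟩ := hnp
  obtain ⟨hcnq, ⟨xq, hxql, hxqn⟩, yq, hyqm, hyqn⟩ := hnq
  by_cases hx : xp = xq
  · subst hx
    have hy : yp ≠ yq := by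
      rintro rfl
      exact hnpq (line_eq_of_incid_s10 (S.ne_of_incid hxpl hypm (ne_of_incid_of_not_incid_s10 hxpn hcnp))
        hxpn hypn hxqn hyqn)
    obtain ⟨t, htm, hte⟩ := R.A6 np nq m e ρ yp p yq q hDnp hDnq hnpq hρp hρq
      (fun h => hce (h ▸ S.incid_right)) hypn hypm hpnp hpe hyqn hyqm hqnq hqe
      (ne_of_incid_of_not_incid_s10 hypm hpm) hy (ne_of_incid_of_not_incid_s10 hypm hqm)
      (ne_of_incid_of_not_incid_s10 hyqm hpm).symm hpq (ne_of_incid_of_not_incid_s10 hyqm hqm)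
    exact exists_incid_left_of_incid_right S ⟨hcnq, ⟨xp, hxql, hxqn⟩, yq, hyqm, hyqn⟩ hDnq hce
      hqe hqnq hql hte htm (ne_of_incid_of_not_incid_s10 htm hqm).symm
  · exact R.A6 np nq l e ρ xp p xq q hDnp hDnq hnpq hρp hρq (fun h => hce (h ▸ S.incid_left))
      hxpn hxpl hpnp hpe hxqn hxql hqnq hqe (ne_of_incid_of_not_incid_s10 hxpl hpl) hx
      (ne_of_incid_of_not_incid_s10 hxpl hql) (ne_of_incid_of_not_incid_s10 hxql hpl).symm hpq
      (ne_of_incid_of_not_incid_s10 hxql hql)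

theorem exists_incid_left_of_mem_crossPoints (S : R.OrdinaryCross l m c) {p q : Point}
    {e : Line} (hp : p ∈ R.crossPoints l m c) (hq : q ∈ R.crossPoints l m c) (hpq : p ≠ q)
    (hpe : R.Incid p e) (hqe : R.Incid q e) (hce : ¬R.Incid c e) :
    ∃ x, R.Incid x l ∧ R.Incid x e := by
  by_cases hDe : R.Incid R.D e
  · exact (isTransversal_of_incid_D S hDe hce).2.1
  by_cases hpl : R.Incid p l
  · exact ⟨p, hpl, hpe⟩
  by_cases hql : R.Incid q l
  · exact ⟨q, hql, hqe⟩
  obtain ⟨np, hnp, hDnp, hpnp⟩ := exists_isTransversal_of_mem_crossPoints hp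
    (ne_of_incid_of_not_incid_s10 hpe hce) (ne_of_incid_of_not_incid_s10 hpe hDe)
  obtain ⟨nq, hnq, hDnq, hqnq⟩ := exists_isTransversal_of_mem_crossPoints hq
    (ne_of_incid_of_not_incid_s10 hqe hce) (ne_of_incid_of_not_incid_s10 hqe hDe)
  by_cases hpm : R.Incid p m
  · exact exists_incid_left_of_incid_right S hnq hDnq hce hqe hqnq hql hpe hpm hpq.symm
  by_cases hqm : R.Incid q m
  · exact exists_incid_left_of_incid_right S hnp hDnp hce hpe hpnp hpl hqe hqm hpq
  by_cases hqnp : R.Incid q np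
  · exact line_eq_of_incid_s10 hpq hpnp hqnp hpe hqe ▸ hnp.2.1
  exact exists_incid_left_of_incid_transversals S hnp hDnp hnq hDnq (fun h => hqnp (h ▸ hqnq))
    hpnp hqnq hpe hqe hce hpq hpl hql hpm hqm

theorem isTransversal_of_mem_crossPoints (S : R.OrdinaryCross l m c) {p q : Point} {e : Line}
    (hp : p ∈ R.crossPoints l m c) (hq : q ∈ R.crossPoints l m c) (hpq : p ≠ q)
    (hpe : R.Incid p e) (hqe : R.Incid q e) (hce : ¬R.Incid c e) : R.IsTransversal l m c e := by
  refine ⟨hce, exists_incid_left_of_mem_crossPoints S hp hq hpq hpe hqe hce, ?_⟩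
  rw [← crossPoints_comm] at hp hq
  exact exists_incid_left_of_mem_crossPoints S.symm hp hq hpq hpe hqe hce

theorem exists_meet_of_meet_off_left (S : R.OrdinaryCross l m c) {g n n' : Line} {z ρ : Point}
    (hn : R.IsTransversal l m c n) (hn' : R.IsTransversal l m c n') (hn'D : ¬R.Incid R.D n')
    (hcg : R.Incid c g) (hzg : R.Incid z g) (hzn' : R.Incid z n') (hzc : z ≠ c)
    (hzn : ¬R.Incid z n) (hρn : R.Incid ρ n) (hρn' : R.Incid ρ n') (hρl : ¬R.Incid ρ l) :
    ∃ r, R.Incid r g ∧ R.Incid r n := by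
  obtain ⟨hcn, ⟨x, hxl, hxn⟩, -⟩ := hn
  obtain ⟨hcn', ⟨x', hx'l, hx'n'⟩, -⟩ := hn'
  exact R.A6 n' l g n x' z ρ c x hn'D S.left_ordinary (fun h => hcn' (h ▸ S.incid_left)) hx'n'
    hx'l (fun h => hcn (h ▸ hcg)) hzn' hzg hρn' hρn S.incid_left hcg hxl hxn
    (ne_of_incid_of_not_incid_s10 hρn hzn).symm hzc (ne_of_incid_of_not_incid_s10 hxn hzn).symm
    (ne_of_incid_of_not_incid_s10 hρn hcn) (ne_of_incid_of_not_incid_s10 hxl hρl).symm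
    (ne_of_incid_of_not_incid_s10 hxn hcn).symm

theorem IsTransversal.exists_meet_of_incid_center (S : R.OrdinaryCross l m c) {g n : Line}
    {z : Point} (hn : R.IsTransversal l m c n) (hcg : R.Incid c g)
    (hz : z ∈ R.crossPoints l m c) (hzc : z ≠ c) (hzg : R.Incid z g) :
    ∃ r, R.Incid r g ∧ R.Incid r n := by
  by_cases hzD : z = R.D
  · exact (R.A5 g n (hzD ▸ hzg) fun h => hn.1 (h ▸ hcg)).exists
  by_cases hzn : R.Incid z n
  · exact ⟨z, hzg, hzn⟩
  obtain ⟨n', hn', hn'D, hzn'⟩ := exists_isTransversal_of_mem_crossPoints hz hzc hzD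
  obtain ⟨ρ, hρn', hρn⟩ := hn'.exists_meet S hn
  by_cases hρl : R.Incid ρ l
  · have hρm : ¬R.Incid ρ m := fun hρm => hn.1 (S.eq_of_incid hρl hρm ▸ hρn)
    exact exists_meet_of_meet_off_left S.symm hn.symm hn'.symm hn'D hcg hzg hzn' hzc hzn hρn hρn'
      hρm
  · exact exists_meet_of_meet_off_left S hn hn' hn'D hcg hzg hzn' hzc hzn hρn hρn' hρl

theorem isTransversal_of_incid_foot (S : R.OrdinaryCross l m c) {g n h : Line} {z q x : Point}
    (hgD : ¬R.Incid R.D g) (hcg : R.Incid c g) (hn : R.IsTransversal l m c n)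
    (hnD : ¬R.Incid R.D n) (hzg : R.Incid z g) (hzn : R.Incid z n) (hqg : R.Incid q g)
    (hqc : q ≠ c) (hql : ¬R.Incid q l) (hqm : ¬R.Incid q m) (hxl : R.Incid x l)
    (hxn : R.Incid x n) (hqh : R.Incid q h) (hxh : R.Incid x h) : R.IsTransversal l m c h := by
  obtain ⟨hcn, -, y, hym, hyn⟩ := hn
  have hxc := ne_of_incid_of_not_incid_s10 hxn hcn
  have hch : ¬R.Incid c h := fun hch =>
    hql (line_eq_of_incid_s10 hxc hxh hch hxl S.incid_left ▸ hqh)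
  obtain ⟨r, hrh, hrm⟩ := R.A6 g n h m z q c x y hgD hnD (fun h => hcn (h ▸ hcg)) hzg hzn
    (fun h => hxc (S.eq_of_incid hxl (h ▸ hxh))) hqg hqh hcg S.incid_right hxn hxh hyn hym
    hqc (ne_of_incid_of_not_incid_s10 hxl hql).symm (ne_of_incid_of_not_incid_s10 hym hqm).symm
    hxc.symm (ne_of_incid_of_not_incid_s10 hyn hcn).symm (S.ne_of_incid hxl hym hxc)
  exact ⟨hch, ⟨x, hxl, hxh⟩, r, hrm, hrh⟩

/-- The points of an ordinary line through `c` are reached by joining them to the feet of an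
ordinary transversal: at most one of the two joins is special, since otherwise both would be
the line through the point and `D`, which would then contain both feet. -/
theorem mem_crossPoints_of_incid_of_incid_center (S : R.OrdinaryCross l m c) {g : Line}
    {z q : Point} (hcg : R.Incid c g) (hgD : ¬R.Incid R.D g) (hz : z ∈ R.crossPoints l m c)
    (hzc : z ≠ c) (hzg : R.Incid z g) (hqg : R.Incid q g) : q ∈ R.crossPoints l m c := by
  by_cases hqc : q = c
  · exact hqc ▸ center_mem_crossPoints
  by_cases hql : R.Incid q l
  · exact mem_crossPoints_of_incid_left S hql
  by_cases hqm : R.Incid q m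
  · exact mem_crossPoints_of_incid_right S hqm
  obtain ⟨n, hn, hnD, hzn⟩ :=
    exists_isTransversal_of_mem_crossPoints hz hzc (ne_of_incid_of_not_incid_s10 hzg hgD)
  obtain ⟨hcn, ⟨x, hxl, hxn⟩, y, hym, hyn⟩ := hn
  obtain ⟨h, hqh, hxh⟩ := exists_line (ne_of_incid_of_not_incid_s10 hxl hql).symm
  obtain ⟨h', hqh', hyh'⟩ := exists_line (ne_of_incid_of_not_incid_s10 hym hqm).symm
  have hth := isTransversal_of_incid_foot S hgD hcg ⟨hcn, ⟨x, hxl, hxn⟩, y, hym, hyn⟩ hnD hzg hzn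
    hqg hqc hql hqm hxl hxn hqh hxh
  have hth' := isTransversal_of_incid_foot S.symm hgD hcg ⟨hcn, ⟨y, hym, hyn⟩, x, hxl, hxn⟩ hnD
    hzg hzn hqg hqc hqm hql hym hyn hqh' hyh'
  by_cases hDh : R.Incid R.D h
  · by_cases hDh' : R.Incid R.D h'
    · have hqD := ne_of_incid_of_not_incid_s10 hqg hgD
      obtain rfl := line_eq_of_incid_s10 hqD hqh hDh hqh' hDh'
      have hxy := S.ne_of_incid hxl hym (ne_of_incid_of_not_incid_s10 hxn hcn)
      exact absurd (line_eq_of_incid_s10 hxy hxh hyh' hxn hyn ▸ hDh) hnD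
    · exact mem_crossPoints_of_isTransversal hth'.symm hDh' hqh'
  · exact mem_crossPoints_of_isTransversal hth hDh hqh

theorem isTransversal_or_of_mem_spannedLines (S : R.OrdinaryCross l m c) {e : Line}
    (he : e ∈ R.spannedLines (R.crossPoints l m c)) :
    R.IsTransversal l m c e ∨
      R.Incid c e ∧ ∃ z ∈ R.crossPoints l m c, z ≠ c ∧ R.Incid z e := by
  obtain ⟨p, hp, q, hq, hpq, hpe, hqe⟩ := he
  by_cases hce : R.Incid c e
  · refine Or.inr ⟨hce, ?_⟩
    by_cases hpc : p = c
    · exact ⟨q, hq, fun hqc => hpq (hpc.trans hqc.symm), hqe⟩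
    · exact ⟨p, hp, hpc, hpe⟩
  · exact Or.inl (isTransversal_of_mem_crossPoints S hp hq hpq hpe hqe hce)

theorem isFull_crossPoints (S : R.OrdinaryCross l m c) :
    R.IsFull (R.crossPoints l m c) (R.spannedLines (R.crossPoints l m c)) := by
  intro e he hDe q hqe
  rcases isTransversal_or_of_mem_spannedLines S he with hte | ⟨hce, z, hz, hzc, hze⟩
  · exact mem_crossPoints_of_isTransversal hte hDe hqe
  · exact mem_crossPoints_of_incid_of_incid_center S hce hDe hz hzc hze hqe

theorem exists_meet_of_mem_spannedLines (S : R.OrdinaryCross l m c) {e f : Line}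
    (he : e ∈ R.spannedLines (R.crossPoints l m c))
    (hf : f ∈ R.spannedLines (R.crossPoints l m c)) : ∃ r, R.Incid r e ∧ R.Incid r f := by
  rcases isTransversal_or_of_mem_spannedLines S he with hte | ⟨hce, z, hz, hzc, hze⟩ <;>
    rcases isTransversal_or_of_mem_spannedLines S hf with htf | ⟨hcf, w, hw, hwc, hwf⟩
  · exact hte.exists_meet S htf
  · obtain ⟨r, hrf, hre⟩ := hte.exists_meet_of_incid_center S hcf hw hwc hwf
    exact ⟨r, hre, hrf⟩
  · exact htf.exists_meet_of_incid_center S hce hz hzc hze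
  · exact ⟨c, hce, hcf⟩

theorem isSubplane_crossPoints (S : R.OrdinaryCross l m c) :
    R.IsSubplane (R.crossPoints l m c) (R.spannedLines (R.crossPoints l m c)) := by
  refine ⟨fun p q hp hq hpq => ?_, fun e f he hf _ => ?_, ?_⟩
  · obtain ⟨e, hpe, hqe⟩ := exists_line hpq
    exact ⟨e, ⟨⟨p, hp, q, hq, hpq, hpe, hqe⟩, hpe, hqe⟩,
      fun f hf => line_eq_of_incid_s10 hpq hf.2.1 hf.2.2 hpe hqe⟩
  · by_cases hD : R.Incid R.D e ∧ R.Incid R.D f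
    · exact ⟨R.D, D_mem_crossPoints, hD⟩
    obtain ⟨r, hre, hrf⟩ := exists_meet_of_mem_spannedLines S he hf
    rcases not_and_or.mp hD with hDe | hDf
    · exact ⟨r, isFull_crossPoints S e he hDe r hre, hre, hrf⟩
    · exact ⟨r, isFull_crossPoints S f hf hDf r hrf, hre, hrf⟩
  · obtain ⟨x₁, x₂, hx₁, hx₂, hx₁c, hx₂c, hx₁₂⟩ := exists_pair_incid_ne (R := R) l c
    obtain ⟨y₁, y₂, hy₁, hy₂, hy₁c, hy₂c, hy₁₂⟩ := exists_pair_incid_ne (R := R) m c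
    refine ⟨x₁, x₂, y₁, y₂, mem_crossPoints_of_incid_left S hx₁,
      mem_crossPoints_of_incid_left S hx₂, mem_crossPoints_of_incid_right S hy₁,
      mem_crossPoints_of_incid_right S hy₂, hx₁₂, S.ne_of_incid hx₁ hy₁ hx₁c,
      S.ne_of_incid hx₁ hy₂ hx₁c, S.ne_of_incid hx₂ hy₁ hx₂c, S.ne_of_incid hx₂ hy₂ hx₂c, hy₁₂,
      fun _ _ => S.not_collinear hx₁ hx₂ hx₁₂ hy₁ hy₁c,
      fun _ _ => S.not_collinear hx₁ hx₂ hx₁₂ hy₂ hy₂c,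
      fun _ _ ⟨h₁, h₂, h₃⟩ => S.symm.not_collinear hy₁ hy₂ hy₁₂ hx₁ hx₁c ⟨h₂, h₃, h₁⟩,
      fun _ _ ⟨h₁, h₂, h₃⟩ => S.symm.not_collinear hy₁ hy₂ hy₁₂ hx₂ hx₂c ⟨h₂, h₃, h₁⟩⟩

theorem exists_special_transversals (S : R.OrdinaryCross l m c) :
    ∃ s₁ s₂, s₁ ≠ s₂ ∧ R.Incid R.D s₁ ∧ R.Incid R.D s₂ ∧
      R.IsTransversal l m c s₁ ∧ R.IsTransversal l m c s₂ := by
  obtain ⟨x₁, x₂, hx₁, hx₂, hx₁c, hx₂c, hx₁₂⟩ := exists_pair_incid_ne (R := R) l c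
  obtain ⟨s₁, hx₁s, hDs₁⟩ := exists_line (ne_of_incid_of_not_incid_s10 hx₁ S.left_ordinary)
  obtain ⟨s₂, hx₂s, hDs₂⟩ := exists_line (ne_of_incid_of_not_incid_s10 hx₂ S.left_ordinary)
  have hcs : ∀ {x : Point} {s : Line}, R.Incid x l → x ≠ c → R.Incid x s → R.Incid R.D s →
      ¬R.Incid c s := fun hx hxc hxs hDs hcs =>
    S.left_ordinary (line_eq_of_incid_s10 hxc hxs hcs hx S.incid_left ▸ hDs)
  refine ⟨s₁, s₂, fun h => ?_, hDs₁, hDs₂, isTransversal_of_incid_D S hDs₁ (hcs hx₁ hx₁c hx₁s hDs₁),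
    isTransversal_of_incid_D S hDs₂ (hcs hx₂ hx₂c hx₂s hDs₂)⟩
  exact S.left_ordinary (line_eq_of_incid_s10 hx₁₂ hx₁s (h ▸ hx₂s) hx₁ hx₂ ▸ hDs₁)

theorem mem_crossPoints_of_isSubplane (S : R.OrdinaryCross l m c) {P : Set Point}
    {L : Set Line} (hsub : R.IsSubplane P L) (hlP : ∀ x, R.Incid x l → x ∈ P) (hm : m ∈ L)
    {q : Point} (hq : q ∈ P) : q ∈ R.crossPoints l m c := by
  by_cases hql : R.Incid q l
  · exact mem_crossPoints_of_incid_left S hql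
  by_cases hqD : q = R.D
  · exact hqD ▸ D_mem_crossPoints
  obtain ⟨s, hqs, hDs⟩ := exists_line hqD
  obtain ⟨x, hxl, hxc, hxs⟩ :=
    exists_incid_ne_not_incid (e := l) (fun h => S.left_ordinary (h ▸ hDs)) c
  obtain ⟨f, ⟨hfL, hqf, hxf⟩, -⟩ :=
    hsub.1 q x hq (hlP x hxl) (ne_of_incid_of_not_incid_s10 hxl hql).symm
  have hfD : ¬R.Incid R.D f := fun h => hxs (line_eq_of_incid_s10 hqD hqf h hqs hDs ▸ hxf)
  have hcf : ¬R.Incid c f := fun h => hql (line_eq_of_incid_s10 hxc hxf h hxl S.incid_left ▸ hqf)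
  obtain ⟨y, -, hyf, hym⟩ := hsub.2.1 f m hfL hm fun h => hcf (h ▸ S.incid_right)
  exact mem_crossPoints_of_isTransversal ⟨hcf, ⟨x, hxl, hxf⟩, y, hym, hyf⟩ hfD hqf

theorem eq_crossPoints_of_isFull (S : R.OrdinaryCross l m c) {P : Set Point} {L : Set Line}
    (hsub : R.IsSubplane P L) (hfull : R.IsFull P L) (hc : c ∈ P) (hl : l ∈ L) (hm : m ∈ L) :
    P = R.crossPoints l m c := by
  have hlP := hfull l hl S.left_ordinary
  have hmP := hfull m hm S.right_ordinary
  have htL : ∀ n, R.IsTransversal l m c n → n ∈ L := fun n ⟨hcn, ⟨x, hxl, hxn⟩, y, hym, hyn⟩ =>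
    hsub.mem_of_incid (hlP x hxl) (hmP y hym)
      (S.ne_of_incid hxl hym (ne_of_incid_of_not_incid_s10 hxn hcn)) hxn hyn
  have hD : R.D ∈ P := by
    obtain ⟨s₁, s₂, hs₁₂, hDs₁, hDs₂, hs₁, hs₂⟩ := exists_special_transversals S
    obtain ⟨r, hr, hrs₁, hrs₂⟩ := hsub.2.1 s₁ s₂ (htL s₁ hs₁) (htL s₂ hs₂) hs₁₂
    rwa [point_eq_of_incid hs₁₂ hrs₁ hrs₂ hDs₁ hDs₂] at hr
  refine Set.Subset.antisymm (fun q hq => mem_crossPoints_of_isSubplane S hsub hlP hm hq) ?_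
  rintro q (rfl | rfl | ⟨n, hn, hnD, hqn⟩)
  · exact hc
  · exact hD
  · exact hfull n (htL n hn) hnD q hqn

theorem existsUnique_isFull_of_ordinaryCross (S : R.OrdinaryCross l m c) {u v : Point}
    (hul : R.Incid u l) (hvm : R.Incid v m) (huc : u ≠ c) (hvc : v ≠ c) :
    ∃! π : Set Point × Set Line,
      R.IsSubplane π.1 π.2 ∧ R.IsFull π.1 π.2 ∧ u ∈ π.1 ∧ v ∈ π.1 ∧ c ∈ π.1 := by
  refine ⟨(R.crossPoints l m c, R.spannedLines (R.crossPoints l m c)),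
    ⟨isSubplane_crossPoints S, isFull_crossPoints S, mem_crossPoints_of_incid_left S hul,
      mem_crossPoints_of_incid_right S hvm, center_mem_crossPoints⟩, ?_⟩
  rintro ⟨P, L⟩ ⟨hsub, hfull, hu, hv, hc⟩
  have hP := eq_crossPoints_of_isFull S hsub hfull hc
    (hsub.mem_of_incid hu hc huc hul S.incid_left) (hsub.mem_of_incid hv hc hvc hvm S.incid_right)
  exact Prod.ext hP (hsub.eq_spannedLines.trans (congrArg _ hP))

end Cross

end ProjRect

/-- Three noncollinear ordinary points lie in a unique full projective subplane. -/
theorem stmt_10 {Point Line : Type} (R : ProjRect Point Line) (p1 p2 p3 : Point)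
    (h1 : p1 ≠ R.D) (h2 : p2 ≠ R.D) (h3 : p3 ≠ R.D)
    (h12 : p1 ≠ p2) (h13 : p1 ≠ p3) (h23 : p2 ≠ p3)
    (hnc : ∀ l : Line, ¬(R.Incid p1 l ∧ R.Incid p2 l ∧ R.Incid p3 l)) :
    ∃! π : Set Point × Set Line,
      R.IsSubplane π.1 π.2 ∧ R.IsFull π.1 π.2 ∧ p1 ∈ π.1 ∧ p2 ∈ π.1 ∧ p3 ∈ π.1 := by
  open ProjRect in
  obtain ⟨e₁₂, h1e₁₂, h2e₁₂⟩ := exists_line (R := R) h12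
  obtain ⟨e₁₃, h1e₁₃, h3e₁₃⟩ := exists_line (R := R) h13
  obtain ⟨e₂₃, h2e₂₃, h3e₂₃⟩ := exists_line (R := R) h23
  have h₁₂₁₃ : e₁₂ ≠ e₁₃ := fun h => hnc e₁₂ ⟨h1e₁₂, h2e₁₂, h ▸ h3e₁₃⟩
  have h₁₂₂₃ : e₁₂ ≠ e₂₃ := fun h => hnc e₁₂ ⟨h1e₁₂, h2e₁₂, h ▸ h3e₂₃⟩
  have h₁₃₂₃ : e₁₃ ≠ e₂₃ := fun h => hnc e₁₃ ⟨h1e₁₃, h ▸ h2e₂₃, h3e₁₃⟩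
  by_cases hD₁₂ : R.Incid R.D e₁₂
  · exact existsUnique_isFull_of_ordinaryCross
      ⟨h3e₁₃, h3e₂₃, h₁₃₂₃, not_incid_D_of_ne h1 h₁₂₁₃ h1e₁₂ h1e₁₃ hD₁₂,
        not_incid_D_of_ne h2 h₁₂₂₃ h2e₁₂ h2e₂₃ hD₁₂⟩ h1e₁₃ h2e₂₃ h13 h23
  by_cases hD₁₃ : R.Incid R.D e₁₃
  · refine (existsUnique_congr fun π => ?_).1 (existsUnique_isFull_of_ordinaryCross
      ⟨h2e₁₂, h2e₂₃, h₁₂₂₃, hD₁₂, not_incid_D_of_ne h3 h₁₃₂₃ h3e₁₃ h3e₂₃ hD₁₃⟩ h1e₁₂ h3e₂₃ h12 h23.symm)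
    tauto
  · refine (existsUnique_congr fun π => ?_).1 (existsUnique_isFull_of_ordinaryCross
      ⟨h1e₁₂, h1e₁₃, h₁₂₁₃, hD₁₂, hD₁₃⟩ h2e₁₂ h3e₁₃ h12.symm h13.symm)
    tauto
end
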